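/- arXiv:1109.3214 — 6 statements merged into one kernel-verified Lean document; each statement's English description precedes it below -/
import Mathlib

section
/- The only orientation-preserving homeomorphisms of the circle that commute with a given irrational rotation R_α are themselves rotations. -/
open Filter Topology Set

noncomputable section

abbrev S1 : Type := AddCircle (1 : ℝ)

/-- `F : ℝ → ℝ` is a lift of the orientation-preserving circle map `f`. -/
def IsLiftOf (F : ℝ → ℝ) (f : S1 → S1) : Prop :=
  StrictMono F ∧ Continuous F ∧ (∀ x, F (x + 1) = F x + 1) ∧
    ∀ x : ℝ, ((F x : ℝ) : S1) = f (x : S1)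

/-- `τ` is the translation number of the lift `F`. -/
def HasTransNum (F : ℝ → ℝ) (τ : ℝ) : Prop :=
  Tendsto (fun n : ℕ => F^[n] 0 / (n : ℝ)) atTop (𝓝 τ)

/-- `r` is the rotation number of the circle map `f`. -/
def HasRotNum (f : S1 → S1) (r : S1) : Prop :=
  ∃ F τ, IsLiftOf F f ∧ HasTransNum F τ ∧ ((τ : ℝ) : S1) = r

/-!
The translations `y` with `f (x + y) = f x + y` for all `x` form a subgroup, which is closed
because `f` is continuous, and which contains `α`. Since `α` is irrational its multiples are
dense in the circle, so this subgroup is the whole circle, and `f x = f (0 + x) = f 0 + x`.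
-/

theorem IsLiftOf.continuous {F : ℝ → ℝ} {f : S1 → S1} (h : IsLiftOf F f) : Continuous f := by
  obtain ⟨-, hFcont, -, hFlift⟩ := h
  rw [QuotientAddGroup.isQuotientMap_mk _ |>.continuous_iff]
  simpa only [Function.comp_def, ← hFlift] using QuotientAddGroup.continuous_mk.comp hFcont

section EquivariantTranslations

variable {G : Type*} [AddGroup G]

def equivariantTranslations (f : G → G) : AddSubgroup G where
  carrier := {y | ∀ x, f (x + y) = f x + y}
  zero_mem' x := by simp
  add_mem' {y z} hy hz x := by rw [← add_assoc, hz, hy, add_assoc]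
  neg_mem' {y} hy x := by
    rw [eq_add_neg_iff_add_eq, ← hy, neg_add_cancel_right]

theorem mem_equivariantTranslations {f : G → G} {y : G} :
    y ∈ equivariantTranslations f ↔ ∀ x, f (x + y) = f x + y :=
  Iff.rfl

variable [TopologicalSpace G] [ContinuousAdd G] [T2Space G]

theorem isClosed_equivariantTranslations {f : G → G} (hf : Continuous f) :
    IsClosed (equivariantTranslations f : Set G) := by
  show IsClosed {y | ∀ x, f (x + y) = f x + y}
  rw [ofPred_forall]
  exact isClosed_iInter fun x => isClosed_eq (by fun_prop) (by fun_prop)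

theorem equivariantTranslations_eq_top {f : G → G} (hf : Continuous f) {a : G}
    (ha : DenseRange (· • a : ℤ → G)) (hfa : ∀ x, f (x + a) = f x + a) :
    equivariantTranslations f = ⊤ := by
  have hle : AddSubgroup.zmultiples a ≤ equivariantTranslations f :=
    AddSubgroup.zmultiples_le_of_mem hfa
  have hdense : Dense (equivariantTranslations f : Set G) :=
    ha.mono <| by simpa only [← AddSubgroup.coe_zmultiples] using SetLike.coe_subset_coe.2 hle
  rw [AddSubgroup.eq_top_iff']
  intro y
  exact (isClosed_equivariantTranslations hf).closure_subset (hdense.closure_eq ▸ mem_univ y)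

end EquivariantTranslations

/-- Any orientation-preserving circle homeomorphism commuting with an irrational
rotation is itself a rotation. -/
theorem commute_irrational_rotation (α : ℝ) (hα : Irrational α)
    (f : S1 → S1) (hf : ∃ F, IsLiftOf F f)
    (hcomm : ∀ x : S1, f (x + ((α : ℝ) : S1)) = f x + ((α : ℝ) : S1)) :
    ∃ β : S1, ∀ x, f x = x + β := by
  obtain ⟨F, hF⟩ := hf
  have hdense : DenseRange (· • ((α : ℝ) : S1) : ℤ → S1) :=
    AddCircle.denseRange_zsmul_coe_iff.2 (by simpa using hα)
  have htop := equivariantTranslations_eq_top hF.continuous hdense hcomm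
  refine ⟨f 0, fun x => ?_⟩
  have := mem_equivariantTranslations.1 ((AddSubgroup.eq_top_iff' _).1 htop x) 0
  rwa [zero_add, add_comm] at this
end
end

section
/- If an orientation-preserving circle homeomorphism g has rotation number 0, and there exist homeomorphisms arbitrarily C⁰-close to g with positive rotation number as well as homeomorphisms arbitrarily C⁰-close with negative rotation number, then g is the identity. -/
/-!
Lift `g` to `F` with integer translation number `m`, so that `F x₀ = x₀ + m` for some `x₀`.
Iterates of lifts uniformly close to `F` stay close to `F^[3] x₀ = x₀ + 3m`, so such lifts have
translation number within `1/3` of `m`; hence a map `h` close to `g` with rotation number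
`σ ∈ [-1/2, 1/2]` has a lift `H` close to `F` with `τ H = m + σ` exactly. If `g` moved a point,
say `F y > y + m`, a close enough `H` still has `H y > y + m`, which forces `τ H ≥ m` and rules
out `σ < 0`; if `F y < y + m`, symmetrically `σ > 0` is ruled out.
-/

open Filter Topology Set

noncomputable section

theorem Continuous.exists_pos_forall_dist_iterate_lt {X : Type*} [PseudoMetricSpace X]
    {F : X → X} (hF : Continuous F) (x : X) (n : ℕ) {ε : ℝ} (hε : 0 < ε) :
    ∃ δ > 0, ∀ H : X → X, (∀ y, dist (H y) (F y) < δ) → dist (H^[n] x) (F^[n] x) < ε := by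
  induction n generalizing ε with
  | zero => exact ⟨1, one_pos, fun H _ => by simpa using hε⟩
  | succ n ih =>
    obtain ⟨η, hη, hFη⟩ := Metric.continuous_iff.mp hF (F^[n] x) (ε / 2) (half_pos hε)
    obtain ⟨δ, hδ, hδn⟩ := ih hη
    refine ⟨min δ (ε / 2), lt_min hδ (half_pos hε), fun H hH => ?_⟩
    have hn := hδn H fun y => (hH y).trans_le (min_le_left _ _)
    rw [Function.iterate_succ_apply', Function.iterate_succ_apply']
    calc dist (H (H^[n] x)) (F (F^[n] x))
        ≤ dist (H (H^[n] x)) (F (H^[n] x)) + dist (F (H^[n] x)) (F (F^[n] x)) :=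
          dist_triangle _ _ _
      _ < ε / 2 + ε / 2 := add_lt_add ((hH _).trans_le (min_le_right _ _)) (hFη _ hn)
      _ = ε := add_halves ε

theorem S1.coe_eq_coe_iff {a b : ℝ} : (a : S1) = (b : S1) ↔ ∃ n : ℤ, a = b + n := by
  rw [← sub_eq_zero, ← AddCircle.coe_sub, AddCircle.coe_eq_zero_iff]
  simp only [zsmul_eq_mul, mul_one, eq_sub_iff_add_eq, eq_comm (a := a), add_comm]

theorem exists_int_forall_abs_sub_lt_of_norm_coe_lt {X : Type*} [TopologicalSpace X]
    [PreconnectedSpace X] {ψ : X → ℝ} (hψ : Continuous ψ) {δ : ℝ} (hδ : δ ≤ 1 / 2)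
    (hnorm : ∀ x, ‖(ψ x : S1)‖ < δ) : ∃ k : ℤ, ∀ x, |ψ x - k| < δ := by
  simp only [UnitAddCircle.norm_eq] at hnorm
  have hround : IsLocallyConstant (round ∘ ψ) := by
    rw [IsLocallyConstant.iff_eventually_eq]
    intro x
    have hgap : 0 < 1 / 2 - |ψ x - round (ψ x)| := by linarith [hnorm x]
    filter_upwards [Metric.tendsto_nhds.mp (hψ.tendsto x) _ hgap] with y hy
    rw [Real.dist_eq] at hy
    have hyx : |ψ y - round (ψ x)| < 1 / 2 :=
      (abs_sub_le (ψ y) (ψ x) (round (ψ x))).trans_lt (by linarith)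
    rw [abs_lt] at hyx
    show round (ψ y) = round (ψ x)
    exact round_eq_iff.mpr ⟨by linarith, by linarith⟩
  rcases isEmpty_or_nonempty X with hX | ⟨⟨x₀⟩⟩
  · exact ⟨0, isEmptyElim⟩
  · refine ⟨round (ψ x₀), fun x => ?_⟩
    rw [← Function.comp_apply (f := round), ← hround.apply_eq_of_preconnectedSpace x x₀]
    exact hnorm x

theorem exists_int_forall_abs_sub_lt_of_dist_lt {f h : S1 → S1} {F H : ℝ → ℝ}
    (hF : Continuous F) (hH : Continuous H) (hFf : ∀ x : ℝ, ((F x : ℝ) : S1) = f x)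
    (hHh : ∀ x : ℝ, ((H x : ℝ) : S1) = h x) {δ : ℝ} (hδ : δ ≤ 1 / 2)
    (hfh : ∀ p, dist (f p) (h p) < δ) : ∃ k : ℤ, ∀ x, |H x - F x - k| < δ :=
  exists_int_forall_abs_sub_lt_of_norm_coe_lt (ψ := fun x => H x - F x) (hH.sub hF) hδ fun x => by
    rw [AddCircle.coe_sub, hFf, hHh, ← dist_eq_norm, dist_comm]
    exact hfh x

theorem HasRotNum.exists_circleDeg1Lift {f : S1 → S1} {r : S1} (hf : HasRotNum f r) :
    ∃ F : CircleDeg1Lift, Continuous F ∧ (∀ x : ℝ, ((F x : ℝ) : S1) = f x) ∧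
      ((F.translationNumber : ℝ) : S1) = r := by
  obtain ⟨F, τ, ⟨hmono, hcont, hone, hlift⟩, hτ, rfl⟩ := hf
  refine ⟨⟨⟨F, hmono.monotone⟩, hone⟩, hcont, hlift, ?_⟩
  congr 1
  refine tendsto_nhds_unique (CircleDeg1Lift.tendsto_translation_number₀ _) ?_
  simpa [CircleDeg1Lift.coe_pow, HasTransNum] using hτ

namespace CircleDeg1Lift

theorem translationNumber_translate_int_mul (k : ℤ) (f : CircleDeg1Lift) :
    (↑(translate (Multiplicative.ofAdd (k : ℝ))) * f).translationNumber =
      k + f.translationNumber := by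
  rw [translationNumber_mul_of_commute, translationNumber_translate]
  rw [commute_iff_commute]
  convert (f.commute_int_add k).symm using 2
  simp [translate_apply]

theorem exists_abs_translationNumber_sub_le {F : CircleDeg1Lift} (hF : Continuous F) {m : ℤ}
    (hm : F.translationNumber = m) {n : ℕ} (hn : 0 < n) :
    ∃ δ > 0, ∀ H : CircleDeg1Lift, (∀ y, dist (H y) (F y) < δ) →
      |H.translationNumber - m| ≤ 1 / n := by
  obtain ⟨x₀, hx₀⟩ := (F.translationNumber_eq_int_iff hF).mp hm
  obtain ⟨δ, hδ, hclose⟩ := hF.exists_pos_forall_dist_iterate_lt x₀ n one_pos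
  refine ⟨δ, hδ, fun H hH => ?_⟩
  have hHn := hclose H hH
  rw [F.iterate_eq_of_map_eq_add_int hx₀, Real.dist_eq, abs_lt, ← coe_pow] at hHn
  have hup : (H ^ n).translationNumber ≤ ((n * m + 1 : ℤ) : ℝ) :=
    translationNumber_le_of_le_add_int (x := x₀) _ (by push_cast; linarith)
  have hlow : ((n * m - 1 : ℤ) : ℝ) ≤ (H ^ n).translationNumber :=
    le_translationNumber_of_add_int_le (x := x₀) _ (by push_cast; linarith)
  rw [translationNumber_pow] at hup hlow
  push_cast at hup hlow
  have hn' : (0 : ℝ) < n := by exact_mod_cast hn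
  rw [le_div_iff₀ hn', ← abs_of_pos hn', ← abs_mul, abs_le]
  constructor <;> linarith [sub_mul H.translationNumber m n]

end CircleDeg1Lift

open CircleDeg1Lift in
theorem exists_lift_near_of_hasRotNum {g : S1 → S1} {F : CircleDeg1Lift} (hF : Continuous F)
    (hFg : ∀ x : ℝ, ((F x : ℝ) : S1) = g x) {m : ℤ} (hm : F.translationNumber = m) :
    ∃ δ₀ > 0, ∀ δ ≤ δ₀, ∀ (h : S1 → S1) (σ : ℝ), (∀ p, dist (g p) (h p) < δ) →
      |σ| ≤ 1 / 2 → HasRotNum h σ →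
        ∃ H : CircleDeg1Lift, (∀ x, |H x - F x| < δ) ∧ H.translationNumber = m + σ := by
  obtain ⟨δ₁, hδ₁, hpin⟩ := exists_abs_translationNumber_sub_le hF hm (n := 3) (by norm_num)
  refine ⟨min δ₁ (1 / 2), lt_min hδ₁ (by norm_num), fun δ hδ h σ hclose hσ hrot => ?_⟩
  obtain ⟨H₁, hH₁, hH₁h, hτ₁⟩ := hrot.exists_circleDeg1Lift
  obtain ⟨j, hj⟩ := S1.coe_eq_coe_iff.mp hτ₁
  obtain ⟨k, hk⟩ := exists_int_forall_abs_sub_lt_of_dist_lt hF hH₁ hFg hH₁h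
    (hδ.trans (min_le_right _ _)) hclose
  set H : CircleDeg1Lift := ↑(translate (Multiplicative.ofAdd ((-k : ℤ) : ℝ))) * H₁
  have hH : ∀ x, H x = H₁ x - k := fun x => by
    simp [H, mul_apply, neg_add_eq_sub]
  have hnear : ∀ x, |H x - F x| < δ := fun x => by rw [hH, sub_right_comm]; exact hk x
  have hτH : H.translationNumber = σ + (j - k : ℤ) := by
    rw [translationNumber_translate_int_mul, hj]; push_cast; ring
  -- `1 / 3 + 1 / 2 < 1` pins the integer part of `τ H`.
  have hjk : j - k = m := by
    have hpinH := hpin H fun x =>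
      (Real.dist_eq _ _ ▸ hnear x).trans_le (hδ.trans (min_le_left _ _))
    rw [hτH, abs_le] at hpinH
    rw [abs_le] at hσ
    have hlt : |((j - k - m : ℤ) : ℝ)| < 1 := by
      push_cast at hpinH ⊢
      rw [abs_lt]
      constructor <;> linarith
    have := Int.abs_lt_one_iff.mp (by exact_mod_cast hlt)
    omega
  exact ⟨H, hnear, by rw [hτH, hjk]; ring⟩

theorem rigid_zero_rotNum_general (g : S1 → S1)
    (h0 : HasRotNum g 0)
    (hpos : ∀ δ > 0, ∃ h : S1 → S1, (∃ F, IsLiftOf F h) ∧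
      (∀ x, dist (g x) (h x) < δ) ∧
      ∃ τ : ℝ, 0 < τ ∧ τ ≤ 1 / 2 ∧ HasRotNum h ((τ : ℝ) : S1))
    (hneg : ∀ δ > 0, ∃ h : S1 → S1, (∃ F, IsLiftOf F h) ∧
      (∀ x, dist (g x) (h x) < δ) ∧
      ∃ τ : ℝ, -(1 / 2) ≤ τ ∧ τ < 0 ∧ HasRotNum h ((τ : ℝ) : S1)) :
    ∀ x, g x = x := by
  obtain ⟨F, hF, hFg, hτ⟩ := h0.exists_circleDeg1Lift
  obtain ⟨m, hm⟩ : ∃ m : ℤ, F.translationNumber = m := by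
    obtain ⟨m, hm⟩ := (S1.coe_eq_coe_iff (b := 0)).mp (by simpa using hτ)
    exact ⟨m, by simpa using hm⟩
  obtain ⟨δ₀, hδ₀, hnear⟩ := exists_lift_near_of_hasRotNum hF hFg hm
  intro p
  obtain ⟨y, rfl⟩ := QuotientAddGroup.mk_surjective p
  by_contra hy
  have hFy : F y ≠ y + m := fun hfix => hy ((hFg y).symm.trans (S1.coe_eq_coe_iff.mpr ⟨m, hfix⟩))
  rcases hFy.lt_or_gt with hlt | hgt
  · obtain ⟨h, -, hclose, σ, hσ, hσ', hrot⟩ :=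
      hpos (min δ₀ (y + m - F y)) (lt_min hδ₀ (by linarith))
    obtain ⟨H, hHF, hH⟩ :=
      hnear _ (min_le_left _ _) h σ hclose (abs_le.mpr ⟨by linarith, hσ'⟩) hrot
    have hHy := H.lt_map_of_int_lt_translationNumber (n := m) (by linarith) y
    have hHFy := (abs_lt.mp (hHF y)).2
    linarith [min_le_right δ₀ (y + m - F y)]
  · obtain ⟨h, -, hclose, σ, hσ', hσ, hrot⟩ :=
      hneg (min δ₀ (F y - (y + m))) (lt_min hδ₀ (by linarith))
    obtain ⟨H, hHF, hH⟩ :=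
      hnear _ (min_le_left _ _) h σ hclose (abs_le.mpr ⟨hσ', by linarith⟩) hrot
    have hHy := H.map_lt_of_translationNumber_lt_int (n := m) (by linarith) y
    have hHFy := (abs_lt.mp (hHF y)).1
    linarith [min_le_right δ₀ (F y - (y + m))]

/-- If `g` has rotation number `0` and there are homeomorphisms arbitrarily
`C⁰`-close to `g` with positive rotation number, and also ones with negative
rotation number, then `g` is the identity. -/
theorem rigid_zero_rotNum (g : S1 → S1) (hg : ∃ F, IsLiftOf F g)
    (h0 : HasRotNum g 0)
    (hpos : ∀ δ > 0, ∃ h : S1 → S1, (∃ F, IsLiftOf F h) ∧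
      (∀ x, dist (g x) (h x) < δ) ∧
      ∃ τ : ℝ, 0 < τ ∧ τ ≤ 1 / 2 ∧ HasRotNum h ((τ : ℝ) : S1))
    (hneg : ∀ δ > 0, ∃ h : S1 → S1, (∃ F, IsLiftOf F h) ∧
      (∀ x, dist (g x) (h x) < δ) ∧
      ∃ τ : ℝ, -(1 / 2) ≤ τ ∧ τ < 0 ∧ HasRotNum h ((τ : ℝ) : S1)) :
    ∀ x, g x = x :=
  rigid_zero_rotNum_general g h0 hpos hneg
end
end

section
/- Let g be an orientation-preserving circle homeomorphism with a fixed point p, whose lift g̃ fixing the lifts of fixed points moves some point to the right by a distance d > 0. Then there exists ε > 0 such that every homeomorphism h with ‖h − g‖_{C⁰} < ε has rotation number in [0, 1/2] (mod ℤ). -/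
open Filter Topology Set

noncomputable section

/-!
Take `ε < min d (1/4)` so small that `G (xp + ε) < xp + 1/2` at a lift `xp` of the fixed point
(possible as `G xp = xp`). If `h` is `ε`-close to `g` and `H` lifts `h`, then `G - H` is
continuous and everywhere within `ε < 1/4` of an integer, hence of one fixed integer `m`, so the
lift `F = H + m` is uniformly `ε`-close to `G`. Since `F x₀ > x₀ + d - ε > x₀`, its translation
number is not negative (a negative one would move every point to the left), and
`F (F xp) ≤ F (xp + ε) < G (xp + ε) + ε < xp + 1`, so twice its translation number is at most `1`.
-/

lemma round_eq_of_abs_sub_lt_half {x : ℝ} {n : ℤ} (h : |x - n| < 1 / 2) : round x = n := by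
  rw [round_eq_iff]
  constructor <;> linarith [abs_lt.1 h]

lemma isLocallyConstant_round_comp {X : Type*} [TopologicalSpace X] {φ : X → ℝ}
    (hφ : Continuous φ) (h : ∀ x, |φ x - round (φ x)| < 1 / 4) :
    IsLocallyConstant fun x => round (φ x) := by
  refine (IsLocallyConstant.iff_exists_open _).2 fun x => ?_
  refine ⟨φ ⁻¹' Metric.ball (φ x) (1 / 4), Metric.isOpen_ball.preimage hφ,
    Metric.mem_ball_self (by norm_num), fun y hy => round_eq_of_abs_sub_lt_half ?_⟩
  rw [Set.mem_preimage, Metric.mem_ball, Real.dist_eq] at hy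
  calc |φ y - round (φ x)| ≤ |φ y - φ x| + |φ x - round (φ x)| := abs_sub_le _ _ _
    _ < 1 / 2 := by linarith [h x]

lemma IsLiftOf.add_int {F : ℝ → ℝ} {f : S1 → S1} (hF : IsLiftOf F f) (m : ℤ) :
    IsLiftOf (fun x => F x + m) f := by
  obtain ⟨hmono, hcont, hper, hlift⟩ := hF
  refine ⟨fun a b hab => add_lt_add_left (hmono hab) _, hcont.add continuous_const,
    fun x => by simp only [hper]; ring, fun x => ?_⟩
  simp [hlift]

lemma IsLiftOf.exists_int_abs_sub_lt {G H : ℝ → ℝ} {g h : S1 → S1} {ε : ℝ}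
    (hG : IsLiftOf G g) (hH : IsLiftOf H h) (hε : ε ≤ 1 / 4)
    (hclose : ∀ x, dist (g x) (h x) < ε) :
    ∃ m : ℤ, ∀ x, |G x - (H x + m)| < ε := by
  set φ : ℝ → ℝ := fun x => G x - H x
  have hφ : ∀ x, |φ x - round (φ x)| < ε := fun x => by
    have := hclose x
    rwa [← hG.2.2.2, ← hH.2.2.2, dist_eq_norm, ← QuotientAddGroup.mk_sub,
      UnitAddCircle.norm_eq] at this
  have hconst := (isLocallyConstant_round_comp (hG.2.1.sub hH.2.1)
    fun x => (hφ x).trans_le hε).eq_const 0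
  refine ⟨round (φ 0), fun x => ?_⟩
  have := hφ x
  rwa [show round (φ x) = round (φ 0) from congrFun hconst x, sub_sub] at this

def IsLiftOf.toCircleDeg1Lift {F : ℝ → ℝ} {f : S1 → S1} (hF : IsLiftOf F f) :
    CircleDeg1Lift :=
  ⟨⟨F, hF.1.monotone⟩, hF.2.2.1⟩

@[simp]
lemma IsLiftOf.toCircleDeg1Lift_apply {F : ℝ → ℝ} {f : S1 → S1} (hF : IsLiftOf F f) (x : ℝ) :
    hF.toCircleDeg1Lift x = F x :=
  rfl

lemma IsLiftOf.hasRotNum {F : ℝ → ℝ} {f : S1 → S1} (hF : IsLiftOf F f) :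
    HasRotNum f (hF.toCircleDeg1Lift.translationNumber : S1) :=
  ⟨F, _, hF, hF.toCircleDeg1Lift.tendsto_translation_number₀.congr fun n => by
    rw [CircleDeg1Lift.coe_pow]; rfl, rfl⟩

lemma Continuous.eventually_map_add_lt {G : ℝ → ℝ} (hG : Continuous G) {x c : ℝ}
    (hx : G x < c) : ∀ᶠ ε in 𝓝[>] (0 : ℝ), G (x + ε) < c := by
  have : Continuous fun ε => G (x + ε) := hG.comp (continuous_const_add x)
  exact nhdsWithin_le_nhds <| (this.tendsto 0).eventually_lt_const (by simpa using hx)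

namespace CircleDeg1Lift

lemma translationNumber_nonneg_of_lt_map (f : CircleDeg1Lift) {x : ℝ} (hx : x < f x) :
    0 ≤ f.translationNumber :=
  not_lt.1 fun hτ => (map_lt_of_translationNumber_lt_int (n := 0) f (by simpa using hτ) x).not_gt
    (by simpa using hx)

lemma translationNumber_le_half_of_map_map_le (f : CircleDeg1Lift) {x : ℝ}
    (hx : f (f x) ≤ x + 1) : f.translationNumber ≤ 1 / 2 := by
  have := (f ^ 2).translationNumber_le_of_le_add_nat (m := 1) (by simpa [sq] using hx)
  rw [translationNumber_pow] at this
  push_cast at this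
  linarith

end CircleDeg1Lift

/-- If `g` has a fixed point and its lift fixing lifts of fixed points moves some
point to the right by `d > 0`, then all homeomorphisms `C⁰`-close to `g` have
rotation number in `[0, 1/2]` (mod ℤ). -/
theorem rotNum_half_interval (g : S1 → S1) (G : ℝ → ℝ) (hG : IsLiftOf G g)
    (hfixlift : ∀ x : ℝ, g (x : S1) = (x : S1) → G x = x)
    (p : S1) (hp : g p = p)
    (d : ℝ) (hd : 0 < d) (x₀ : ℝ) (hx₀ : G x₀ = x₀ + d) :
    ∃ ε > 0, ∀ h : S1 → S1, (∃ H, IsLiftOf H h) →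
      (∀ x, dist (g x) (h x) < ε) →
      ∃ τ : ℝ, 0 ≤ τ ∧ τ ≤ 1 / 2 ∧ HasRotNum h ((τ : ℝ) : S1) := by
  obtain ⟨xp, rfl⟩ := QuotientAddGroup.mk_surjective p
  have hGxp : G xp = xp := hfixlift xp hp
  have hsmall : ∀ᶠ ε in 𝓝[>] (0 : ℝ), ε < 1 / 4 ∧ ε < d :=
    nhdsWithin_le_nhds <| (eventually_lt_nhds (by norm_num)).and (eventually_lt_nhds hd)
  obtain ⟨ε, ⟨hGε, hε4, hεd⟩, hε0⟩ :=
    (((hG.2.1.eventually_map_add_lt (x := xp) (c := xp + 1 / 2) (by linarith)).and hsmall).and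
      eventually_mem_nhdsWithin).exists
  refine ⟨ε, hε0, fun h ⟨H, hH⟩ hclose => ?_⟩
  obtain ⟨m, hm⟩ := hG.exists_int_abs_sub_lt hH hε4.le hclose
  have hH' := hH.add_int m
  set F := hH'.toCircleDeg1Lift
  have hF : ∀ x, G x - ε < F x ∧ F x < G x + ε := fun x => by
    have := abs_lt.1 (hm x)
    constructor <;> simp only [F, IsLiftOf.toCircleDeg1Lift_apply] <;> linarith
  refine ⟨F.translationNumber, F.translationNumber_nonneg_of_lt_map (x := x₀) ?_,
    F.translationNumber_le_half_of_map_map_le (x := xp) ?_, hH'.hasRotNum⟩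
  · linarith [(hF x₀).1]
  · calc F (F xp) ≤ F (xp + ε) := F.monotone (by linarith [(hF xp).2])
      _ ≤ xp + 1 := by linarith [(hF (xp + ε)).2]
end
end

section
/- Suppose f : S¹ × [a,b] → S¹ × [a,b] is C², f(x,t) = (f_t(x), t), the rotation number ρ(t) = ρ(f_t) is strictly monotone increasing, ρ(t₀) = 0, and f_{t₀} = Id with ∂f_t/∂t(x, t₀) > 0 for all x. Define for t > t₀ the rotation time T_t as the least integer n with F_tⁿ(0) ≥ 1, where F_t is the lift of f_t with translation number in (0,1). Then lim_{t↓t₀} (t − t₀)·T_t = ∫_{S¹} (∂f_t/∂t(x, t₀))⁻¹ dx. -/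
/-!
Let `h x = ∂F/∂t (x, t₀)` and let `Φ x = ∫₀ˣ 1 / h` be the time the flow of `ẋ = h(x)` needs to
travel from `0` to `x`. Since `F x t = x + (t - t₀) h(x) + o(t - t₀)` uniformly for `x ∈ [0, 1]`,
one application of `F_t` advances `Φ` by `(t - t₀)(1 + o(1))`. The orbit of `0` first passes `1`
at step `T_t`, so `(t - t₀) T_t (1 + o(1)) = Φ 1 + O(t - t₀)`, and `(t - t₀) T_t → Φ 1`.
-/

open Filter Topology Set

noncomputable section

open Function

theorem Convex.norm_image_sub_sub_smul_le_of_norm_hasDerivWithin_sub_le {E : Type*}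
    [NormedAddCommGroup E] [NormedSpace ℝ E] {f f' : ℝ → E} {s : Set ℝ} {x y C : ℝ} {v : E}
    (hs : Convex ℝ s) (hf : ∀ z ∈ s, HasDerivWithinAt f (f' z) s z)
    (bound : ∀ z ∈ s, ‖f' z - v‖ ≤ C) (xs : x ∈ s) (ys : y ∈ s) :
    ‖f y - f x - (y - x) • v‖ ≤ C * ‖y - x‖ := by
  refine hs.norm_image_sub_le_of_norm_hasFDerivWithin_le'
    (φ := .toSpanSingleton ℝ v) hf (fun z hz => ?_) xs ys
  have : ContinuousLinearMap.toSpanSingleton ℝ (f' z) - .toSpanSingleton ℝ v =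
      .toSpanSingleton ℝ (f' z - v) := by ext; simp
  simpa [this] using bound z hz

section PartialDerivative

variable {G : ℝ → ℝ → ℝ} {a b : ℝ}

theorem hasDerivWithinAt_of_contDiffOn_prod_Icc
    (hG : ContDiffOn ℝ 1 (uncurry G) (univ ×ˢ Icc a b)) (x : ℝ) {t : ℝ} (ht : t ∈ Icc a b) :
    HasDerivWithinAt (G x ·) (fderivWithin ℝ (uncurry G) (univ ×ˢ Icc a b) (x, t) (0, 1))
      (Icc a b) t :=
  ((hG.differentiableOn one_ne_zero (x, t) ⟨trivial, ht⟩).hasFDerivWithinAt.comp_hasDerivWithinAt t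
    ((hasDerivWithinAt_const t _ x).prodMk (hasDerivWithinAt_id t _)) fun _ hs => ⟨trivial, hs⟩)

theorem derivWithin_eq_of_contDiffOn_prod_Icc (hab : a < b)
    (hG : ContDiffOn ℝ 1 (uncurry G) (univ ×ˢ Icc a b)) (x : ℝ) {t : ℝ} (ht : t ∈ Icc a b) :
    derivWithin (G x ·) (Icc a b) t =
      fderivWithin ℝ (uncurry G) (univ ×ˢ Icc a b) (x, t) (0, 1) :=
  (hasDerivWithinAt_of_contDiffOn_prod_Icc hG x ht).derivWithin (uniqueDiffOn_Icc hab t ht)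

theorem continuousOn_fderivWithin_apply_of_contDiffOn_prod_Icc (hab : a < b)
    (hG : ContDiffOn ℝ 1 (uncurry G) (univ ×ˢ Icc a b)) :
    ContinuousOn (fun p => fderivWithin ℝ (uncurry G) (univ ×ˢ Icc a b) p (0, 1))
      (univ ×ˢ Icc a b) :=
  (hG.continuousOn_fderivWithin (uniqueDiffOn_univ.prod (uniqueDiffOn_Icc hab)) le_rfl).clm_apply
    continuousOn_const

theorem continuous_derivWithin_of_contDiffOn_prod_Icc (hab : a < b)
    (hG : ContDiffOn ℝ 1 (uncurry G) (univ ×ˢ Icc a b)) {t₀ : ℝ} (ht₀ : t₀ ∈ Icc a b) :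
    Continuous fun x => derivWithin (G x ·) (Icc a b) t₀ := by
  simp_rw [derivWithin_eq_of_contDiffOn_prod_Icc hab hG _ ht₀]
  exact (continuousOn_fderivWithin_apply_of_contDiffOn_prod_Icc hab hG).comp_continuous
    (.prodMk_left t₀) fun _ => ⟨trivial, ht₀⟩

theorem eventually_abs_sub_sub_mul_derivWithin_le (hab : a < b)
    (hG : ContDiffOn ℝ 1 (uncurry G) (univ ×ˢ Icc a b)) {t₀ : ℝ} (ht₀ : t₀ ∈ Icc a b)
    {K : Set ℝ} (hK : IsCompact K) {δ : ℝ} (hδ : 0 < δ) :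
    ∀ᶠ t in 𝓝[Ioc t₀ b] t₀, ∀ x ∈ K,
      |G x t - G x t₀ - (t - t₀) * derivWithin (G x ·) (Icc a b) t₀| ≤ δ * (t - t₀) := by
  set ψ := fun p => fderivWithin ℝ (uncurry G) (univ ×ˢ Icc a b) p (0, 1)
  obtain ⟨η, hη, hψ⟩ := Metric.uniformContinuousOn_iff_le.1
    ((hK.prod isCompact_Icc).uniformContinuousOn_of_continuous
      ((continuousOn_fderivWithin_apply_of_contDiffOn_prod_Icc hab hG).mono
        (prod_mono (subset_univ K) le_rfl))) δ hδ
  filter_upwards [self_mem_nhdsWithin, nhdsWithin_le_nhds (Metric.closedBall_mem_nhds t₀ hη)]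
    with t ht htη x hx
  have htt₀ : 0 < t - t₀ := sub_pos.2 ht.1
  rw [Metric.mem_closedBall, Real.dist_eq, abs_of_pos htt₀] at htη
  have hsub : Icc t₀ t ⊆ Icc a b := Icc_subset_Icc ht₀.1 ht.2
  have hmv := (convex_Icc t₀ t).norm_image_sub_sub_smul_le_of_norm_hasDerivWithin_sub_le
    (f := fun s => G x s) (v := ψ (x, t₀))
    (fun s hs => (hasDerivWithinAt_of_contDiffOn_prod_Icc hG x (hsub hs)).mono hsub)
    (fun s hs => hψ (x, s) ⟨hx, hsub hs⟩ (x, t₀) ⟨hx, ht₀⟩ <| by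
      rw [Prod.dist_eq, dist_self, Real.dist_eq, abs_of_nonneg (sub_nonneg.2 hs.1)]
      exact max_le hη.le (by linarith [hs.2]))
    (left_mem_Icc.2 ht.1.le) (right_mem_Icc.2 ht.1.le)
  rw [derivWithin_eq_of_contDiffOn_prod_Icc hab hG x ht₀]
  simpa only [Real.norm_eq_abs, smul_eq_mul, abs_of_pos htt₀] using hmv

end PartialDerivative

def travelTime (h : ℝ → ℝ) (x : ℝ) : ℝ := ∫ y in (0 : ℝ)..x, (h y)⁻¹

theorem hasDerivAt_travelTime {h : ℝ → ℝ} (hh : Continuous h) (h0 : ∀ x, h x ≠ 0) (x : ℝ) :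
    HasDerivAt (travelTime h) (h x)⁻¹ x :=
  ((hh.inv₀ h0).integral_hasStrictDerivAt 0 x).hasDerivAt

theorem strictMono_travelTime {h : ℝ → ℝ} (hh : Continuous h) (hpos : ∀ x, 0 < h x) :
    StrictMono (travelTime h) :=
  strictMono_of_deriv_pos fun x =>
    (hasDerivAt_travelTime hh (fun y => (hpos y).ne') x).deriv ▸ inv_pos.2 (hpos x)

theorem eventually_abs_travelTime_sub_sub_le {ι : Type*} {l : Filter ι} {h : ℝ → ℝ} {σ : ι → ℝ}
    {φ : ι → ℝ → ℝ}
    (hh : Continuous h) (h0 : ∀ x, h x ≠ 0) (hσ : Tendsto σ l (𝓝[>] 0))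
    (hφ : ∀ δ > 0, ∀ᶠ i in l, ∀ u ∈ Icc (0 : ℝ) 1, |φ i u - u - σ i * h u| ≤ δ * σ i)
    {δ : ℝ} (hδ : 0 < δ) :
    ∀ᶠ i in l, ∀ u ∈ Icc (0 : ℝ) 1,
      |travelTime h (φ i u) - travelTime h u - σ i| ≤ δ * σ i := by
  have hH : Continuous fun x => (h x)⁻¹ := hh.inv₀ h0
  obtain ⟨C, hC⟩ := isCompact_Icc.exists_bound_of_continuousOn (s := Icc (0 : ℝ) 1) hH.continuousOn
  obtain ⟨M, hM⟩ := isCompact_Icc.exists_bound_of_continuousOn (s := Icc (0 : ℝ) 1) hh.continuousOn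
  have hC0 : 0 ≤ C := (norm_nonneg _).trans (hC 0 (left_mem_Icc.2 zero_le_one))
  have hM0 : 0 ≤ M := (norm_nonneg _).trans (hM 0 (left_mem_Icc.2 zero_le_one))
  set η := δ / (2 * (M + 1))
  have hη : 0 < η := by positivity
  obtain ⟨r, hr, hHr⟩ := Metric.mem_uniformity_dist.1 <|
    isCompact_Icc.uniformContinuousAt_of_continuousAt (s := Icc (0 : ℝ) 1) _
      (fun x _ => hH.continuousAt) (Metric.dist_mem_uniformity hη)
  set δ' := min 1 (δ / (2 * (C + 1)))
  have hδ' : 0 < δ' := by positivity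
  filter_upwards [hφ δ' hδ', hσ self_mem_nhdsWithin,
    (hσ.mono_right nhdsWithin_le_nhds).eventually (gt_mem_nhds (by positivity : 0 < r / (M + 1)))]
    with i hstep hσpos hσr u hu
  set v := φ i u
  have hσ0 : 0 < σ i := hσpos
  have hvu : |v - u| ≤ (M + 1) * σ i := by
    have hhu : |h u| ≤ M := hM u hu
    calc |v - u| ≤ |v - u - σ i * h u| + |σ i * h u| := by
          simpa using abs_add_le (v - u - σ i * h u) (σ i * h u)
      _ ≤ δ' * σ i + σ i * M := by
          rw [abs_mul, abs_of_pos hσ0]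
          gcongr
          exact hstep u hu
      _ ≤ (M + 1) * σ i := by nlinarith [min_le_left 1 (δ / (2 * (C + 1)))]
  have hderiv : |travelTime h v - travelTime h u - (v - u) * (h u)⁻¹| ≤ η * |v - u| := by
    have hmv := (convex_uIcc u v).norm_image_sub_sub_smul_le_of_norm_hasDerivWithin_sub_le
      (v := (h u)⁻¹) (C := η) (fun z _ => (hasDerivAt_travelTime hh h0 z).hasDerivWithinAt)
      (fun z hz => ?_) left_mem_uIcc right_mem_uIcc
    · simpa only [Real.norm_eq_abs, smul_eq_mul] using hmv
    have hzu : dist u z < r := by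
      rw [dist_comm, Real.dist_eq]
      calc |z - u| ≤ |v - u| := abs_sub_left_of_mem_uIcc hz
        _ ≤ (M + 1) * σ i := hvu
        _ < r := by rwa [lt_div_iff₀ (by positivity), mul_comm] at hσr
    rw [← dist_eq_norm, dist_comm]
    exact (hHr hzu hu).le
  have hslope : |(v - u) * (h u)⁻¹ - σ i| ≤ δ' * σ i * C := by
    have hHu : |(h u)⁻¹| ≤ C := hC u hu
    calc |(v - u) * (h u)⁻¹ - σ i| = |v - u - σ i * h u| * |(h u)⁻¹| := by
          rw [← abs_mul]
          congr 1
          field_simp [h0 u]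
      _ ≤ δ' * σ i * C := by gcongr; exact hstep u hu
  have hδ'C : δ' * C ≤ δ / 2 := by
    calc δ' * C ≤ δ / (2 * (C + 1)) * (C + 1) := by
          gcongr
          exacts [min_le_right _ _, le_add_of_nonneg_right zero_le_one]
      _ = δ / 2 := by field_simp
  calc |travelTime h v - travelTime h u - σ i|
      ≤ |travelTime h v - travelTime h u - (v - u) * (h u)⁻¹| + |(v - u) * (h u)⁻¹ - σ i| :=
        abs_sub_le _ _ _
    _ ≤ η * ((M + 1) * σ i) + δ' * σ i * C := add_le_add (hderiv.trans (by gcongr)) hslope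
    _ ≤ δ * σ i := by
        have : η * (M + 1) = δ / 2 := by simp only [η]; field_simp
        nlinarith

theorem abs_sub_sub_mul_le_of_abs_sub_sub_le {Y : ℕ → ℝ} {n : ℕ} {s e : ℝ}
    (hY : ∀ k < n, |Y (k + 1) - Y k - s| ≤ e) : ∀ k ≤ n, |Y k - Y 0 - k * s| ≤ k * e := by
  intro k hk
  induction k with
  | zero => simp
  | succ k ih =>
    calc |Y (k + 1) - Y 0 - (k + 1 : ℕ) * s|
        = |(Y (k + 1) - Y k - s) + (Y k - Y 0 - k * s)| := by push_cast; ring_nf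
      _ ≤ e + k * e := (abs_add_le _ _).trans (add_le_add (hY k hk) (ih (by omega)))
      _ = (k + 1 : ℕ) * e := by push_cast; ring

theorem abs_hittingTime_mul_sub_le {g Φ : ℝ → ℝ} {n : ℕ} {s e : ℝ} (hs : 0 ≤ s) (hΦ : Monotone Φ)
    (hg : ∀ u ∈ Ico (0 : ℝ) 1, 0 ≤ g u ∧ |Φ (g u) - Φ u - s| ≤ e)
    (hn : 1 ≤ g^[n] 0) (hlt : ∀ m < n, g^[m] 0 < 1) :
    |n * s - (Φ 1 - Φ 0)| ≤ s + n * e := by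
  have horbit : ∀ k < n, g^[k] 0 ∈ Ico (0 : ℝ) 1 := by
    intro k hk
    induction k with
    | zero => exact ⟨le_rfl, hlt 0 hk⟩
    | succ k ih =>
      refine ⟨?_, hlt _ hk⟩
      rw [iterate_succ_apply']
      exact (hg _ (ih (by omega))).1
  have hn0 : n ≠ 0 := by rintro rfl; rw [iterate_zero_apply] at hn; linarith
  have he : 0 ≤ e := (abs_nonneg _).trans (hg 0 ⟨le_rfl, one_pos⟩).2
  have hY := abs_sub_sub_mul_le_of_abs_sub_sub_le (Y := fun k => Φ (g^[k] 0)) (n := n)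
    (fun k hk => by simpa only [iterate_succ_apply'] using (hg _ (horbit k hk)).2)
  have hup : Φ 1 ≤ Φ (g^[n] 0) := hΦ hn
  have hlow : Φ (g^[n - 1] 0) ≤ Φ 1 := hΦ (hlt _ (by omega)).le
  have h1 := abs_le.1 (hY n le_rfl)
  have h2 := abs_le.1 (hY (n - 1) (by omega))
  simp only [iterate_zero_apply, Nat.cast_pred (Nat.pos_of_ne_zero hn0)] at h1 h2
  rw [abs_le]
  constructor <;> linarith

theorem tendsto_of_forall_eventually_abs_sub_le {ι : Type*} {l : Filter ι} {y σ : ι → ℝ} {c : ℝ}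
    (hσ : Tendsto σ l (𝓝 0)) (hy : ∀ δ > 0, ∀ᶠ i in l, |y i - c| ≤ σ i + δ * |y i|) :
    Tendsto y l (𝓝 c) := by
  rw [Metric.tendsto_nhds]
  intro ε hε
  set δ := min (1 / 2) (ε / (4 * (|c| + 1)))
  have hδ : 0 < δ := by positivity
  have hδc : δ * |c| ≤ ε / 4 := by
    calc δ * |c| ≤ ε / (4 * (|c| + 1)) * (|c| + 1) := by
          gcongr
          exacts [min_le_right _ _, le_add_of_nonneg_right zero_le_one]
      _ = ε / 4 := by field_simp
  filter_upwards [hy δ hδ, (Metric.tendsto_nhds.1 hσ) (ε / 4) (by positivity)] with i hi hσi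
  rw [Real.dist_eq, sub_zero] at hσi
  rw [Real.dist_eq]
  have hyc : |y i| ≤ |y i - c| + |c| := by simpa using abs_add_le (y i - c) c
  have hδ2 : δ ≤ 1 / 2 := min_le_left _ _
  nlinarith [le_abs_self (σ i), abs_nonneg (y i - c)]

theorem tendsto_mul_hittingTime {ι : Type*} {l : Filter ι} {h : ℝ → ℝ} {σ : ι → ℝ}
    {φ : ι → ℝ → ℝ} {n : ι → ℕ} (hh : Continuous h) (hpos : ∀ x, 0 < h x)
    (hσ : Tendsto σ l (𝓝[>] 0))
    (hφ : ∀ δ > 0, ∀ᶠ i in l, ∀ u ∈ Icc (0 : ℝ) 1, |φ i u - u - σ i * h u| ≤ δ * σ i)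
    (hn : ∀ᶠ i in l, 1 ≤ (φ i)^[n i] 0 ∧ ∀ m < n i, (φ i)^[m] 0 < 1) :
    Tendsto (fun i => σ i * n i) l (𝓝 (∫ x in (0 : ℝ)..1, (h x)⁻¹)) := by
  have hΦ := strictMono_travelTime hh hpos
  have hI : ∫ x in (0 : ℝ)..1, (h x)⁻¹ = travelTime h 1 - travelTime h 0 := by
    simp [travelTime]
  rw [hI]
  refine tendsto_of_forall_eventually_abs_sub_le (hσ.mono_right nhdsWithin_le_nhds) fun δ hδ => ?_
  filter_upwards [eventually_abs_travelTime_sub_sub_le hh (fun x => (hpos x).ne') hσ hφ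
    (lt_min hδ one_pos), hσ self_mem_nhdsWithin, hn] with i hstep hσi ⟨hreach, hbefore⟩
  have hσ0 : 0 < σ i := hσi
  have hcount := abs_hittingTime_mul_sub_le hσ0.le hΦ.monotone
    (fun u hu => ⟨?_, hstep u (Ico_subset_Icc_self hu)⟩) hreach hbefore
  · calc |σ i * n i - (travelTime h 1 - travelTime h 0)|
        ≤ σ i + n i * (min δ 1 * σ i) := by rwa [mul_comm]
      _ = σ i + min δ 1 * |σ i * n i| := by rw [abs_of_nonneg (by positivity)]; ring
      _ ≤ σ i + δ * |σ i * n i| := by gcongr; exact min_le_left δ 1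
  · -- a step advances `travelTime` by at least `(1 - min δ 1) σ ≥ 0`, so it cannot go below `0`
    rw [← hΦ.le_iff_le]
    have := abs_le.1 (hstep u (Ico_subset_Icc_self hu))
    nlinarith [min_le_right δ 1, hΦ.monotone hu.1]

theorem rotation_time_limit_general (a b : ℝ) (hab : a < b) (F : ℝ → ℝ → ℝ)
    (hC2 : ContDiffOn ℝ 2 (fun p : ℝ × ℝ => F p.1 p.2) (univ ×ˢ Icc a b))
    (t₀ : ℝ) (ht₀ : t₀ ∈ Icc a b)
    (hid : ∀ x : ℝ, F x t₀ = x)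
    (hpos : ∀ x : ℝ, 0 < derivWithin (fun t => F x t) (Icc a b) t₀)
    (T : ℝ → ℕ)
    (hT : ∀ t ∈ Ioc t₀ b,
      1 ≤ (fun x => F x t)^[T t] 0 ∧ ∀ m < T t, (fun x => F x t)^[m] 0 < 1) :
    Tendsto (fun t => (t - t₀) * (T t : ℝ)) (𝓝[Ioc t₀ b] t₀)
      (𝓝 (∫ x in (0:ℝ)..1, (derivWithin (fun t => F x t) (Icc a b) t₀)⁻¹)) := by
  have hF : ContDiffOn ℝ 1 (uncurry F) (univ ×ˢ Icc a b) := hC2.of_le (by norm_num)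
  refine tendsto_mul_hittingTime (continuous_derivWithin_of_contDiffOn_prod_Icc hab hF ht₀) hpos
    ?_ (fun δ hδ => ?_) (eventually_nhdsWithin_of_forall hT)
  · refine tendsto_nhdsWithin_iff.2 ⟨?_, eventually_nhdsWithin_of_forall fun t ht => sub_pos.2 ht.1⟩
    exact tendsto_sub_nhds_zero_iff.2 nhdsWithin_le_nhds
  · filter_upwards [eventually_abs_sub_sub_mul_derivWithin_le hab hF ht₀ isCompact_Icc hδ]
      with t ht u hu
    simpa only [hid] using ht u hu

/-- The rotation time `T_t` (least `n` with `F_t^[n] 0 ≥ 1`) satisfies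
`(t - t₀) T_t → ∫_{S¹} (∂F/∂t(x,t₀))⁻¹ dx` as `t ↓ t₀`. -/
theorem rotation_time_limit (a b : ℝ) (hab : a < b) (F : ℝ → ℝ → ℝ)
    (hC2 : ContDiffOn ℝ 2 (fun p : ℝ × ℝ => F p.1 p.2) (univ ×ˢ Icc a b))
    (hper : ∀ x : ℝ, ∀ t ∈ Icc a b, F (x + 1) t = F x t + 1)
    (hmono : ∀ t ∈ Icc a b, StrictMono fun x => F x t)
    (ρ : ℝ → ℝ) (hρ : ∀ t ∈ Icc a b, HasTransNum (fun x => F x t) (ρ t))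
    (hρmono : StrictMonoOn ρ (Icc a b))
    (t₀ : ℝ) (ht₀ : t₀ ∈ Icc a b) (hρ0 : ρ t₀ = 0)
    (hid : ∀ x : ℝ, F x t₀ = x)
    (hpos : ∀ x : ℝ, 0 < derivWithin (fun t => F x t) (Icc a b) t₀)
    (T : ℝ → ℕ)
    (hT : ∀ t ∈ Ioc t₀ b,
      1 ≤ (fun x => F x t)^[T t] 0 ∧ ∀ m < T t, (fun x => F x t)^[m] 0 < 1) :
    Tendsto (fun t => (t - t₀) * (T t : ℝ)) (𝓝[Ioc t₀ b] t₀)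
      (𝓝 (∫ x in (0:ℝ)..1, (derivWithin (fun t => F x t) (Icc a b) t₀)⁻¹)) :=
  rotation_time_limit_general a b hab F hC2 t₀ ht₀ hid hpos T hT
end
end

section
/- Let f be a circle homeomorphism with rotation number ρ(f) = α irrational, and consider the family f_t = R_t ∘ f. Then for arbitrarily small s > 0 and arbitrarily small s < 0, R_s ∘ f has a periodic point; hence ρ⁻¹(α) = {0} for this family. -/
open Filter Topology Set

noncomputable section

namespace IrrationalIsolatedAux

open CircleDeg1Lift

local notation "τ" => CircleDeg1Lift.translationNumber

/-- Translation by `s` as a `CircleDeg1Lift`. -/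
def TT (s : ℝ) : CircleDeg1Lift :=
  (CircleDeg1Lift.translate (Multiplicative.ofAdd s) : CircleDeg1Liftˣ)

lemma TT_mul_apply (s x : ℝ) (g : CircleDeg1Lift) : (TT s * g) x = s + g x := rfl

lemma TT_mul_TT (a b : ℝ) : TT a * TT b = TT (a + b) := by
  ext x; simp [TT, mul_apply, translate_apply, add_assoc]

lemma tau_TT_int (k : ℤ) (X : CircleDeg1Lift) : τ (TT k * X) = k + τ X := by
  rw [translationNumber_mul_of_commute, TT, translationNumber_translate]
  exact commute_iff_commute.mpr fun y => (X.map_int_add k y).symm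

/-- The `CircleDeg1Lift` built out of a lift of a circle homeomorphism. -/
def mkLift {F : ℝ → ℝ} {f : S1 → S1} (hF : IsLiftOf F f) : CircleDeg1Lift :=
  ⟨⟨F, hF.1.monotone⟩, hF.2.2.1⟩

lemma mkLift_coe {F : ℝ → ℝ} {f : S1 → S1} (hF : IsLiftOf F f) : ⇑(mkLift hF) = F := rfl

/-- Uniqueness of the limit defining the translation number. -/
lemma hasTransNum_eq {F : ℝ → ℝ} {t : ℝ} (g : CircleDeg1Lift) (hcoe : ⇑g = F)
    (h : HasTransNum F t) : t = τ g := by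
  refine tendsto_nhds_unique h ?_
  have h2 := g.tendsto_translation_number₀
  convert h2 using 2 with n
  rw [coe_pow, hcoe]

lemma coe_eq_coe_int {a b : ℝ} (h : ((a : ℝ) : S1) = ((b : ℝ) : S1)) :
    ∃ m : ℤ, a - b = m := by
  have h2 : a - b ∈ AddSubgroup.zmultiples (1 : ℝ) :=
    (QuotientAddGroup.eq_iff_sub_mem).mp h
  obtain ⟨m, hm⟩ := (AddSubgroup.mem_zmultiples_iff).mp h2
  exact ⟨m, by simpa using hm.symm⟩

lemma coe_iterate_lift {F : ℝ → ℝ} {f : S1 → S1} (hF : IsLiftOf F f) (s : ℝ) (n : ℕ) (x : ℝ) :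
    (((fun y => F y + s)^[n] x : ℝ) : S1) = (fun y => f y + ((s : ℝ) : S1))^[n] (x : S1) := by
  induction n with
  | zero => rfl
  | succ n ih =>
    rw [Function.iterate_succ_apply', Function.iterate_succ_apply', ← ih]
    show (((F ((fun y => F y + s)^[n] x) + s : ℝ)) : S1) = _
    rw [QuotientAddGroup.mk_add, hF.2.2.2]

/-- From a real periodic point of the lift to a periodic point on the circle. -/
lemma periodic_of_real {F : ℝ → ℝ} {f : S1 → S1} (hF : IsLiftOf F f) {s x : ℝ} {q : ℕ} {p : ℤ}
    (h : (fun y => F y + s)^[q] x = x + (p : ℝ)) :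
    (fun y => f y + ((s : ℝ) : S1))^[q] ((x : ℝ) : S1) = ((x : ℝ) : S1) := by
  rw [← coe_iterate_lift hF, h, QuotientAddGroup.mk_add]
  have hp : (((p : ℝ) : ℝ) : S1) = 0 := (AddCircle.coe_eq_zero_iff _).mpr ⟨p, by simp⟩
  rw [hp, add_zero]

lemma iterate_TT_le (g : CircleDeg1Lift) {s : ℝ} (hs : 0 ≤ s) (n : ℕ) (x : ℝ) (hn : 0 < n) :
    g^[n] x + s ≤ (TT s * g)^[n] x := by
  induction n with
  | zero => omega
  | succ n ih =>
    rcases Nat.eq_zero_or_pos n with h0 | hpos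
    · subst h0; simp [TT]; rw [add_comm]
    · rw [Function.iterate_succ_apply', Function.iterate_succ_apply']
      calc g (g^[n] x) + s ≤ s + g ((TT s * g)^[n] x - s) := by
            rw [add_comm]
            exact (add_le_add_iff_left s).mpr (g.mono (by linarith [ih hpos]))
        _ ≤ (TT s * g) ((TT s * g)^[n] x) := by
            show _ ≤ s + g _
            exact (add_le_add_iff_left s).mpr (g.mono (by linarith))

/-- The key lemma: if `τ g` is irrational, translating by any `s > 0` changes the
translation number. -/
lemma key (g : CircleDeg1Lift) (hirr : Irrational (τ g)) {s : ℝ} (hs : 0 < s) :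
    τ (TT s * g) ≠ τ g := by
  intro heq
  obtain ⟨n, hn⟩ := exists_nat_one_div_lt hs
  obtain ⟨p, k, hk0, hkn, hpk⟩ := Real.exists_int_int_abs_mul_sub_le (τ g) (Nat.succ_pos n)
  set q : ℕ := k.toNat with hqdef
  have hq0 : 0 < q := by omega
  have hqk : (q : ℤ) = k := Int.toNat_of_nonneg hk0.le
  have hqr : (q : ℝ) = (k : ℝ) := by exact_mod_cast congrArg (Int.cast : ℤ → ℝ) hqk
  have hcs : |(q : ℝ) * τ g - p| < s := by
    rw [hqr]
    have h1 : |(k : ℝ) * τ g - p| ≤ 1 / ((n : ℝ) + 1 + 1) := by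
      convert hpk using 3
      push_cast; ring
    have h2 : (0 : ℝ) < (n : ℝ) + 1 := by positivity
    have h3 : (1 : ℝ) / ((n : ℝ) + 1 + 1) ≤ 1 / ((n : ℝ) + 1) := by
      apply one_div_le_one_div_of_le h2; linarith
    linarith
  have hc0 : (q : ℝ) * τ g - p ≠ 0 := by
    intro h
    exact (hirr.ne_rat ((p : ℚ) / (q : ℚ))) (by
      have hq' : (q : ℝ) ≠ 0 := by positivity
      push_cast
      field_simp
      linarith)
  rcases lt_or_gt_of_ne hc0 with hneg | hpos
  · have hlt : τ ((TT s * g) ^ q) < (p : ℝ) := by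
      rw [translationNumber_pow, heq]; linarith
    have hmap := fun x => ((TT s * g) ^ q).map_lt_of_translationNumber_lt_int (n := p) hlt x
    have hle : ∀ x, (g ^ q) x ≤ x + ((p : ℝ) - s) := by
      intro x
      have h1 := iterate_TT_le g hs.le q x hq0
      have h2 := hmap x
      rw [coe_pow] at h2 ⊢
      linarith
    have := (g ^ q).translationNumber_le_of_le_add hle
    rw [translationNumber_pow] at this
    rw [abs_lt] at hcs
    linarith
  · have hlt : (p : ℝ) < τ (g ^ q) := by rw [translationNumber_pow]; linarith
    have hmap := fun x => (g ^ q).lt_map_of_int_lt_translationNumber (n := p) hlt x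
    have hge : ∀ x, x + ((p : ℝ) + s) ≤ ((TT s * g) ^ q) x := by
      intro x
      have h1 := iterate_TT_le g hs.le q x hq0
      have h2 := hmap x
      rw [coe_pow] at h2 ⊢
      linarith
    have := ((TT s * g) ^ q).le_translationNumber_of_add_le hge
    rw [translationNumber_pow, heq] at this
    rw [abs_lt] at hcs
    linarith

/-- The crossing lemma: between a parameter with rotation number `< p/q` and one with
rotation number `> p/q` there is a parameter with a `(q,p)`-periodic orbit. -/
lemma cross {F : ℝ → ℝ} {f : S1 → S1} (hF : IsLiftOf F f) {a b : ℝ} (hab : a ≤ b)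
    {q : ℕ} (hq : 0 < q) {p : ℤ}
    (ha : τ ((TT a * mkLift hF) ^ q) < p) (hb : (p : ℝ) < τ ((TT b * mkLift hF) ^ q)) :
    ∃ s ∈ Icc a b, τ ((TT s * mkLift hF) ^ q) = p ∧
      ∃ x : ℝ, (fun y => F y + s)^[q] x = x + p := by
  set g := mkLift hF with hg
  have hfun : ∀ s : ℝ, ⇑(TT s * g) = fun y => F y + s := by
    intro s; funext y; rw [TT_mul_apply, mkLift_coe, add_comm]
  have hcont : ∀ s : ℝ, Continuous ⇑((TT s * g) ^ q) := by
    intro s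
    exact (TT s * g).continuous_pow (by rw [hfun]; exact hF.2.1.add continuous_const) q
  by_cases hex : ∃ s ∈ Icc a b, τ ((TT s * g) ^ q) = (p : ℝ)
  · obtain ⟨s, hs, hps⟩ := hex
    refine ⟨s, hs, hps, ?_⟩
    obtain ⟨x, hx⟩ := (((TT s * g) ^ q).translationNumber_eq_int_iff (hcont s)).mp hps
    refine ⟨x, ?_⟩
    rw [coe_pow, hfun] at hx
    exact hx
  · exfalso
    push_neg at hex
    have hJ : ∀ n : ℕ, Continuous (fun pr : ℝ × ℝ => (fun y => F y + pr.1)^[n] pr.2) := by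
      intro n
      induction n with
      | zero => simpa using continuous_snd
      | succ n ih =>
        simp only [Function.iterate_succ_apply']
        exact (hF.2.1.comp ih).add continuous_fst
    set u : Set ℝ := ⋃ x : ℝ, {s | (fun y => F y + s)^[q] x < x + p} with hu
    set v : Set ℝ := ⋃ x : ℝ, {s | x + (p : ℝ) < (fun y => F y + s)^[q] x} with hv
    have hcx : ∀ x : ℝ, Continuous fun s => (fun y => F y + s)^[q] x :=
      fun x => (hJ q).comp (continuous_id.prodMk continuous_const)
    have huo : IsOpen u := isOpen_iUnion fun x => isOpen_lt (hcx x) continuous_const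
    have hvo : IsOpen v := isOpen_iUnion fun x => isOpen_lt continuous_const (hcx x)
    have hiter : ∀ s : ℝ, ⇑((TT s * g) ^ q) = (fun y => F y + s)^[q] := by
      intro s; rw [coe_pow, hfun]
    have hcover : Icc a b ⊆ u ∪ v := by
      intro s hs
      rcases lt_trichotomy (τ ((TT s * g) ^ q)) ((p : ℝ)) with h | h | h
      · left
        refine mem_iUnion.mpr ⟨0, ?_⟩
        have := ((TT s * g) ^ q).map_lt_of_translationNumber_lt_int (n := p) h 0
        rw [hiter s] at this
        simpa using this
      · exact absurd h (hex s hs)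
      · right
        refine mem_iUnion.mpr ⟨0, ?_⟩
        have := ((TT s * g) ^ q).lt_map_of_int_lt_translationNumber (n := p) h 0
        rw [hiter s] at this
        simpa using this
    have hau : a ∈ u := by
      refine mem_iUnion.mpr ⟨0, ?_⟩
      have := ((TT a * g) ^ q).map_lt_of_translationNumber_lt_int (n := p) ha 0
      rw [hiter a] at this
      simpa using this
    have hbv : b ∈ v := by
      refine mem_iUnion.mpr ⟨0, ?_⟩
      have := ((TT b * g) ^ q).lt_map_of_int_lt_translationNumber (n := p) hb 0
      rw [hiter b] at this
      simpa using this
    obtain ⟨s, hsI, hsu, hsv⟩ := isPreconnected_Icc (u := u) (v := v) huo hvo hcover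
      ⟨a, ⟨le_refl a, hab⟩, hau⟩ ⟨b, ⟨hab, le_refl b⟩, hbv⟩
    obtain ⟨x₁, hx₁⟩ := mem_iUnion.mp hsu
    obtain ⟨x₂, hx₂⟩ := mem_iUnion.mp hsv
    have hle : τ ((TT s * g) ^ q) ≤ (p : ℝ) := by
      refine ((TT s * g) ^ q).translationNumber_le_of_le_add_int (x := x₁) ?_
      rw [hiter s]
      exact le_of_lt hx₁
    have hge : (p : ℝ) ≤ τ ((TT s * g) ^ q) := by
      refine ((TT s * g) ^ q).le_translationNumber_of_add_int_le (x := x₂) ?_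
      rw [hiter s]
      exact le_of_lt hx₂
    exact hex s hsI (le_antisymm hle hge)

end IrrationalIsolatedAux

open IrrationalIsolatedAux

local notation "τ" => CircleDeg1Lift.translationNumber

/-- For `f` with irrational rotation number `α` and the family `f_s = R_s ∘ f`:
there are arbitrarily small `s > 0` and `s < 0` for which `R_s ∘ f` has a
periodic point; hence in this family `ρ⁻¹(α) = {0}`. -/
theorem irrational_isolated (f : S1 → S1) (hf : ∃ F, IsLiftOf F f)
    (α : ℝ) (hα : Irrational α) (hρα : HasRotNum f ((α : ℝ) : S1)) :
    (∀ ε > 0, ∃ s : ℝ, 0 < s ∧ s < ε ∧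
      ∃ (x : S1) (n : ℕ), 0 < n ∧ (fun y => f y + ((s : ℝ) : S1))^[n] x = x) ∧
    (∀ ε > 0, ∃ s : ℝ, -ε < s ∧ s < 0 ∧
      ∃ (x : S1) (n : ℕ), 0 < n ∧ (fun y => f y + ((s : ℝ) : S1))^[n] x = x) ∧
    (∀ s ∈ Ico (0:ℝ) 1,
      HasRotNum (fun y => f y + ((s : ℝ) : S1)) ((α : ℝ) : S1) → s = 0) := by
  obtain ⟨F, t0, hF, ht0, ht0c⟩ := hρα
  set g := mkLift hF with hg
  have hβ : t0 = τ g := hasTransNum_eq g (mkLift_coe hF) ht0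
  have hβc : ((τ g : ℝ) : S1) = ((α : ℝ) : S1) := by rw [← hβ]; exact ht0c
  obtain ⟨k₀, hk₀⟩ := coe_eq_coe_int hβc
  have hirr : Irrational (τ g) := by
    have h : τ g = α + k₀ := by linarith
    rw [h]; exact hα.add_intCast k₀
  have hTT0 : TT 0 * g = g := by ext x; rw [TT_mul_apply, zero_add]
  have hmono : ∀ {s t : ℝ}, s ≤ t → τ (TT s * g) ≤ τ (TT t * g) := by
    intro s t hst
    apply CircleDeg1Lift.translationNumber_mono
    intro x
    rw [TT_mul_apply, TT_mul_apply]
    linarith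
  have hstrict : ∀ {s : ℝ}, 0 < s → τ g < τ (TT s * g) := by
    intro s hs
    refine lt_of_le_of_ne ?_ (Ne.symm (key g hirr hs))
    calc τ g = τ (TT 0 * g) := by rw [hTT0]
      _ ≤ _ := hmono hs.le
  have hratke : ∀ r : ℚ, (r : ℝ) = (r.num : ℝ) / (r.den : ℝ) := fun r => by
    exact_mod_cast (Rat.num_div_den r).symm
  refine ⟨?_, ?_, ?_⟩
  · -- positive side
    intro ε hε
    have he : 0 < ε / 2 := by linarith
    obtain ⟨r, hr1, hr2⟩ := exists_rat_btwn (hstrict he)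
    have hq : 0 < r.den := r.pos
    have hden : (0 : ℝ) < (r.den : ℝ) := by exact_mod_cast hq
    have ha : τ ((TT 0 * g) ^ r.den) < (r.num : ℝ) := by
      rw [CircleDeg1Lift.translationNumber_pow, hTT0]
      have := mul_lt_mul_of_pos_left hr1 hden
      rw [hratke r] at this
      rw [mul_div_cancel₀] at this
      · exact this
      · exact ne_of_gt hden
    have hb : (r.num : ℝ) < τ ((TT (ε / 2) * g) ^ r.den) := by
      rw [CircleDeg1Lift.translationNumber_pow]
      have := mul_lt_mul_of_pos_left hr2 hden
      rw [hratke r] at this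
      rw [mul_div_cancel₀] at this
      · exact this
      · exact ne_of_gt hden
    obtain ⟨s, hsI, hτs, x, hx⟩ := cross hF he.le hq ha hb
    have hs0 : s ≠ 0 := by
      intro h
      rw [h, ← hg] at hτs
      rw [hτs] at ha
      exact lt_irrefl _ ha
    exact ⟨s, lt_of_le_of_ne hsI.1 (Ne.symm hs0), lt_of_le_of_lt hsI.2 (by linarith),
      ((x : ℝ) : S1), r.den, hq, periodic_of_real hF hx⟩
  · -- negative side
    intro ε hε
    have he : 0 < ε / 2 := by linarith
    have hlt : τ (TT (-(ε / 2)) * g) < τ g := by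
      refine lt_of_le_of_ne ?_ ?_
      · calc τ (TT (-(ε / 2)) * g) ≤ τ (TT 0 * g) := hmono (by linarith)
          _ = τ g := by rw [hTT0]
      · intro h
        have hirr' : Irrational (τ (TT (-(ε / 2)) * g)) := h ▸ hirr
        have := key (TT (-(ε / 2)) * g) hirr' he
        rw [← mul_assoc, TT_mul_TT] at this
        have h0 : (ε / 2 + -(ε / 2)) = (0 : ℝ) := by ring
        rw [h0, hTT0, h] at this
        exact this rfl
    obtain ⟨r, hr1, hr2⟩ := exists_rat_btwn hlt
    have hq : 0 < r.den := r.pos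
    have hden : (0 : ℝ) < (r.den : ℝ) := by exact_mod_cast hq
    have ha : τ ((TT (-(ε / 2)) * g) ^ r.den) < (r.num : ℝ) := by
      rw [CircleDeg1Lift.translationNumber_pow]
      have := mul_lt_mul_of_pos_left hr1 hden
      rw [hratke r] at this
      rw [mul_div_cancel₀] at this
      · exact this
      · exact ne_of_gt hden
    have hb : (r.num : ℝ) < τ ((TT 0 * g) ^ r.den) := by
      rw [CircleDeg1Lift.translationNumber_pow, hTT0]
      have := mul_lt_mul_of_pos_left hr2 hden
      rw [hratke r] at this
      rw [mul_div_cancel₀] at this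
      · exact this
      · exact ne_of_gt hden
    obtain ⟨s, hsI, hτs, x, hx⟩ := cross hF (show -(ε / 2) ≤ 0 by linarith) hq ha hb
    have hs0 : s ≠ 0 := by
      intro h
      rw [h, ← hg] at hτs
      rw [hτs] at hb
      exact lt_irrefl _ hb
    exact ⟨s, by linarith [hsI.1], lt_of_le_of_ne hsI.2 hs0,
      ((x : ℝ) : S1), r.den, hq, periodic_of_real hF hx⟩
  · -- rigidity on [0, 1)
    intro s hs hrot
    rcases (eq_or_lt_of_le hs.1) with h0 | h0
    · exact h0.symm
    exfalso
    obtain ⟨F', t', hF', ht', ht'c⟩ := hrot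
    -- `F'` and `fun y => F y + s` are both lifts of `fun y => f y + s`
    have hKcoe : ∀ x : ℝ, ((F x + s : ℝ) : S1) = f (x : S1) + ((s : ℝ) : S1) := by
      intro x
      rw [QuotientAddGroup.mk_add, hF.2.2.2]
    have hD : ∀ x : ℝ, ∃ m : ℤ, F' x - (F x + s) = m := by
      intro x
      have h1 : ((F' x : ℝ) : S1) = ((F x + s : ℝ) : S1) := by
        rw [hF'.2.2.2, hKcoe]
      exact coe_eq_coe_int h1
    have hDcont : Continuous (fun x => F' x - (F x + s)) :=
      hF'.2.1.sub (hF.2.1.add continuous_const)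
    obtain ⟨k, hk⟩ := hD 0
    have hconst : ∀ x, F' x = F x + s + k := by
      intro x
      obtain ⟨m, hm⟩ := hD x
      have hmk : m = k := by
        by_contra hne
        set D := fun y : ℝ => F' y - (F y + s) with hDdef
        have hD0 : D 0 = k := hk
        have hDx : D x = m := hm
        rcases lt_or_gt_of_ne hne with hlt | hlt
        · -- m < k, use c = k - 1/2
          have hm1 : (m : ℝ) ≤ (k : ℝ) - 1 := by
            have : m + 1 ≤ k := hlt
            exact_mod_cast by push_cast; linarith [this]
          have hcmem : ((k : ℝ) - 1/2) ∈ uIcc (D x) (D 0) := by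
            rw [hDx, hD0]
            apply Set.mem_uIcc.mpr
            left
            constructor <;> linarith
          obtain ⟨y, _, hy⟩ := intermediate_value_uIcc (hDcont.continuousOn) hcmem
          obtain ⟨m', hm'⟩ := hD y
          have : (m' : ℝ) = (k : ℝ) - 1/2 := by rw [← hm']; exact hy
          have h2 : ((2 * m' : ℤ) : ℝ) = ((2 * k - 1 : ℤ) : ℝ) := by push_cast; linarith
          have := Int.cast_injective (α := ℝ) h2
          omega
        · -- k < m, use c = k + 1/2
          have hm1 : (k : ℝ) + 1 ≤ (m : ℝ) := by
            have : k + 1 ≤ m := hlt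
            exact_mod_cast by push_cast; linarith [this]
          have hcmem : ((k : ℝ) + 1/2) ∈ uIcc (D x) (D 0) := by
            rw [hDx, hD0]
            apply Set.mem_uIcc.mpr
            right
            constructor <;> linarith
          obtain ⟨y, _, hy⟩ := intermediate_value_uIcc (hDcont.continuousOn) hcmem
          obtain ⟨m', hm'⟩ := hD y
          have : (m' : ℝ) = (k : ℝ) + 1/2 := by rw [← hm']; exact hy
          have h2 : ((2 * m' : ℤ) : ℝ) = ((2 * k + 1 : ℤ) : ℝ) := by push_cast; linarith
          have := Int.cast_injective (α := ℝ) h2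
          omega
      rw [← hmk] at *
      linarith [hm]
    -- hence `t' = k + τ (TT s * g)`
    have hcoe' : ⇑(TT ((k : ℝ) + s) * g) = F' := by
      funext y
      rw [TT_mul_apply, mkLift_coe, hconst y]
      ring
    have ht'eq : t' = τ (TT ((k : ℝ) + s) * g) :=
      hasTransNum_eq _ hcoe' ht'
    have hsplit : τ (TT ((k : ℝ) + s) * g) = (k : ℝ) + τ (TT s * g) := by
      rw [← TT_mul_TT, mul_assoc, tau_TT_int k (TT s * g)]
    -- t' and τ g have the same image in S1, so they differ by an integer
    have ht'β : ((t' : ℝ) : S1) = ((τ g : ℝ) : S1) := by rw [ht'c, hβc]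
    obtain ⟨m, hm⟩ := coe_eq_coe_int ht'β
    -- so τ (TT s * g) = τ g + (m - k)
    have hj : τ (TT s * g) = τ g + ((m - k : ℤ) : ℝ) := by
      push_cast
      rw [ht'eq, hsplit] at hm
      linarith
    have hub : τ (TT s * g) ≤ 1 + τ g := by
      have h1 : τ (TT s * g) ≤ τ (TT 1 * g) := hmono hs.2.le
      have h2 : τ (TT (1 : ℝ) * g) = 1 + τ g := by
        have := tau_TT_int 1 g
        norm_num at this
        exact this
      linarith
    have hlb : τ g < τ (TT s * g) := hstrict h0
    have hj1 : (m - k : ℤ) = 1 := by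
      have h1 : (0 : ℝ) < ((m - k : ℤ) : ℝ) := by linarith [hj ▸ hlb]
      have h2 : ((m - k : ℤ) : ℝ) ≤ 1 := by
        rw [hj] at hub; linarith
      have h1' : 0 < (m - k : ℤ) := by exact_mod_cast h1
      have h2' : (m - k : ℤ) ≤ 1 := by exact_mod_cast h2
      omega
    have hτs1 : τ (TT s * g) = τ g + 1 := by
      rw [hj, hj1]; norm_num
    -- apply the key lemma at `TT s * g` with translation `1 - s`
    have hirr' : Irrational (τ (TT s * g)) := by
      rw [hτs1]
      have := hirr.add_intCast 1
      norm_num at this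
      exact this
    have hkey := key (TT s * g) hirr' (show 0 < 1 - s by linarith [hs.2])
    rw [← mul_assoc, TT_mul_TT] at hkey
    have h1s : (1 - s + s) = (1 : ℝ) := by ring
    rw [h1s] at hkey
    apply hkey
    rw [hτs1]
    have h2 : τ (TT (1 : ℝ) * g) = 1 + τ g := by
      have := tau_TT_int 1 g
      norm_num at this
      exact this
    rw [h2]
    ring
end
end

section
/- Let f_t be a C¹ family (in both variables) of circle diffeomorphisms with f_0 = R_α the rotation by an irrational α. Then ρ(t) (a continuous lift of the rotation number) is differentiable at t = 0 with ρ'(0) = ∫_{S¹} ∂f_t/∂t(x, 0) dx. -/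
open Filter Topology Set

noncomputable section

/-!
Write `φ x = ∂ₜF(x, 0)`. The `C¹` hypothesis, compactness of the circle and the mean value theorem
give `F(x, t) = x + α + t φ(x) + o(t)` uniformly in `x` (a little-o along `𝓝 0 ×ˢ ⊤`), and by
induction `F_t^N(x) = x + N α + t S_N φ(x) + o(t)` for each fixed `N`, where `S_N φ` is the
Birkhoff sum of `φ` along the rotation by `α`. As `α` is irrational the rotation is uniquely
ergodic: `S_N φ / N → ∫₀¹ φ` uniformly. So for `δ > 0` there is an `N` with
`|F_t^N(x) - x - N (α + t ∫₀¹ φ)| ≤ N δ |t|` for all `x` and all small `t`; since the translation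
number of `F_t^N` is `N ρ(t)`, this gives `|ρ(t) - α - t ∫₀¹ φ| ≤ δ |t|`.
-/

open Function Asymptotics Uniformity

namespace HasTransNum

variable {F : ℝ → ℝ} {τ : ℝ}

theorem iterate (h : HasTransNum F τ) (N : ℕ) : HasTransNum F^[N] (N * τ) := by
  rcases N.eq_zero_or_pos with rfl | hN
  · simp [HasTransNum]
  have hsub : Tendsto (fun n : ℕ => F^[N * n] 0 / (N * n : ℕ)) atTop (𝓝 τ) :=
    h.comp (tendsto_id.const_mul_atTop' hN)
  refine (hsub.const_mul (N : ℝ)).congr' ?_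
  filter_upwards [eventually_gt_atTop 0] with n hn
  rw [iterate_mul]
  push_cast
  field_simp

theorem abs_sub_le {c η : ℝ} (h : HasTransNum F τ) (hF : ∀ x, |F x - x - c| ≤ η) :
    |τ - c| ≤ η := by
  have horbit : ∀ n : ℕ, |F^[n] 0 - n * c| ≤ n * η := by
    intro n
    induction n with
    | zero => simp
    | succ n ih =>
      rw [iterate_succ_apply']
      calc |F (F^[n] 0) - ↑(n + 1) * c|
          = |(F (F^[n] 0) - F^[n] 0 - c) + (F^[n] 0 - n * c)| := by push_cast; ring_nf
        _ ≤ η + n * η := (abs_add_le _ _).trans (add_le_add (hF _) ih)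
        _ = ↑(n + 1) * η := by push_cast; ring
  refine le_of_tendsto ((h.sub_const c).abs) ?_
  filter_upwards [eventually_gt_atTop 0] with n hn
  have hn' : (0 : ℝ) < n := by exact_mod_cast hn
  rw [div_sub' hn'.ne', abs_div, abs_of_pos hn', div_le_iff₀ hn', mul_comm η]
  exact horbit n

end HasTransNum

theorem abs_apply_add_int_mul_sub_le {g : ℝ → ℝ} {a C : ℝ} (hg : ∀ x, |g (x + a) - g x| ≤ C)
    (m : ℤ) (x : ℝ) : |g (x + m * a) - g x| ≤ m.natAbs * C := by
  have hnat : ∀ (k : ℕ) (x : ℝ), |g (x + k * a) - g x| ≤ k * C := by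
    intro k
    induction k with
    | zero => simp
    | succ k ih =>
      intro x
      calc |g (x + ↑(k + 1) * a) - g x|
          = |(g (x + k * a + a) - g (x + k * a)) + (g (x + k * a) - g x)| := by
            push_cast; ring_nf
        _ ≤ C + k * C := (abs_add_le _ _).trans (add_le_add (hg _) (ih x))
        _ = ↑(k + 1) * C := by push_cast; ring
  obtain ⟨k, rfl | rfl⟩ := Int.eq_nat_or_neg m
  · simpa using hnat k x
  · rw [abs_sub_comm]
    simpa [← sub_eq_add_neg] using hnat k (x - k * a)

theorem Irrational.exists_forall_abs_sub_int_mul_add_int_lt {α r : ℝ} (hα : Irrational α)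
    (hr : 0 < r) : ∃ K : ℕ, ∀ z : ℝ, ∃ m n : ℤ, m.natAbs ≤ K ∧ |z - (m * α + n)| < r := by
  have hdense : Dense (AddSubgroup.closure {α, 1} : Set ℝ) :=
    dense_addSubgroupClosure_pair_iff.2 (by simpa using hα)
  have hcover : Icc (0 : ℝ) 1 ⊆ ⋃ p : ℤ × ℤ, Metric.ball (p.1 * α + p.2) r := by
    intro z _
    obtain ⟨w, hw, hwS⟩ := Metric.dense_iff.1 hdense z r hr
    obtain ⟨m, n, rfl⟩ := AddSubgroup.mem_closure_pair.1 hwS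
    exact mem_iUnion.2 ⟨(m, n), by simpa [dist_comm, zsmul_eq_mul] using hw⟩
  obtain ⟨s, hs⟩ := isCompact_Icc.elim_finite_subcover _ (fun _ => Metric.isOpen_ball) hcover
  refine ⟨s.sup fun p => p.1.natAbs, fun z => ?_⟩
  obtain ⟨p, hp, hzp⟩ := mem_iUnion₂.1 (hs ⟨Int.fract_nonneg z, (Int.fract_lt_one z).le⟩)
  refine ⟨p.1, p.2 + ⌊z⌋, Finset.le_sup (f := fun p : ℤ × ℤ => p.1.natAbs) hp, ?_⟩
  rw [Metric.mem_ball, Real.dist_eq, Int.fract] at hzp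
  convert hzp using 2
  push_cast
  ring

theorem abs_sub_intervalIntegral_le {g : ℝ → ℝ} {x η : ℝ}
    (hg : IntervalIntegrable g MeasureTheory.volume 0 1) (h : ∀ y, |g x - g y| ≤ η) :
    |g x - ∫ y in (0 : ℝ)..1, g y| ≤ η := by
  have := intervalIntegral.norm_integral_le_of_norm_le_const (a := 0) (b := 1)
    (f := fun y => g x - g y) fun y _ => h y
  rwa [intervalIntegral.integral_sub intervalIntegrable_const hg, intervalIntegral.integral_const,
    sub_zero, abs_one, mul_one, one_smul] at this

theorem ContinuousOn.tendstoUniformly_of_periodic {E : Type*} [UniformSpace E] {Φ : ℝ → ℝ → E}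
    {U : Set ℝ} {t₀ c : ℝ} (hΦ : ContinuousOn (uncurry Φ) (U ×ˢ univ)) (hU : U ∈ 𝓝 t₀)
    (hc : 0 < c) (hper : ∀ t ∈ U, Periodic (Φ t) c) :
    TendstoUniformly Φ (Φ t₀) (𝓝 t₀) := by
  intro u hu
  obtain ⟨v, hv, hvu⟩ := isCompact_Icc.mem_uniformity_of_prod (k := Icc 0 c)
    (hΦ.mono (prod_mono subset_rfl (subset_univ _))) (mem_of_mem_nhds hU) (symm_le_uniformity hu)
  rw [nhdsWithin_eq_nhds.2 hU] at hv
  filter_upwards [hv, hU] with t hvt htU x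
  have hred : ∀ s ∈ U, Φ s (toIcoMod hc 0 x) = Φ s x := fun s hs => (hper s hs).sub_zsmul_eq _
  simpa only [hred t htU, hred t₀ (mem_of_mem_nhds hU), mem_preimage, Prod.swap_prod_mk] using
    hvu t hvt _ (Ico_subset_Icc_self (toIcoMod_mem_Ico' hc x))

namespace Function.Periodic

variable {φ : ℝ → ℝ} {c : ℝ}

theorem uniformContinuous_of_continuous (hp : Periodic φ c) (hc : 0 < c) (hφ : Continuous φ) :
    UniformContinuous φ := by
  have : Fact (0 < c) := ⟨hc⟩
  have hlift : Continuous (hp.lift : AddCircle c → ℝ) :=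
    (QuotientAddGroup.isQuotientMap_mk _).continuous_iff.2 hφ
  have hmk : UniformContinuous ((↑) : ℝ → AddCircle c) :=
    uniformContinuous_of_continuousAt_zero (QuotientAddGroup.mk' _)
      continuous_quotient_mk'.continuousAt
  exact (CompactSpace.uniformContinuous_of_continuous hlift).comp hmk

theorem birkhoffSum_add_right (hp : Periodic φ c) (α : ℝ) (N : ℕ) :
    Periodic (birkhoffSum (· + α) φ N) c := by
  intro x
  simp only [birkhoffSum, add_right_iterate_apply, add_right_comm x c, hp _]

theorem intervalIntegral_birkhoffSum_add_right (hp : Periodic φ c) (hφ : Continuous φ) (α : ℝ)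
    (N : ℕ) : ∫ x in (0)..c, birkhoffSum (· + α) φ N x = N * ∫ x in (0)..c, φ x := by
  have hshift : ∀ j : ℕ, ∫ x in (0)..c, φ (x + j • α) = ∫ x in (0)..c, φ x := fun j => by
    rw [intervalIntegral.integral_comp_add_right, zero_add, add_comm c,
      hp.intervalIntegral_add_eq (j • α) 0, zero_add]
  simp only [birkhoffSum, add_right_iterate_apply]
  rw [intervalIntegral.integral_finsetSum (f := fun (j : ℕ) x => φ (x + j • α)) fun j _ =>
    (hφ.comp (continuous_add_const _)).intervalIntegrable _ _]
  rw [Finset.sum_congr rfl fun j _ => hshift j, Finset.sum_const, Finset.card_range, nsmul_eq_mul]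

theorem abs_sub_le_of_abs_add_sub_le {g : ℝ → ℝ} {α C η r : ℝ} {K : ℕ}
    (hg : Periodic g 1) (hstep : ∀ x, |g (x + α) - g x| ≤ C)
    (hclose : ∀ y z, |y - z| < r → |g y - g z| ≤ η)
    (hK : ∀ z : ℝ, ∃ m n : ℤ, m.natAbs ≤ K ∧ |z - (m * α + n)| < r) (x y : ℝ) :
    |g y - g x| ≤ η + K * C := by
  obtain ⟨m, n, hmK, hmn⟩ := hK (y - x)
  have hC : 0 ≤ C := (abs_nonneg _).trans (hstep 0)
  have hnear : |g y - g (x + m * α + n)| ≤ η := hclose _ _ (by convert hmn using 2; ring)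
  have hint : g (x + m * α + n) = g (x + m * α) := by simpa using hg.int_mul n (x + m * α)
  calc |g y - g x| ≤ |g y - g (x + m * α + n)| + |g (x + m * α) - g x| := by
        rw [hint]; exact abs_sub_le _ _ _
    _ ≤ η + K * C := add_le_add hnear ((abs_apply_add_int_mul_sub_le hstep m x).trans
        (mul_le_mul_of_nonneg_right (by exact_mod_cast hmK) hC))

end Function.Periodic

theorem Irrational.tendstoUniformly_birkhoffAverage_add {α : ℝ} {φ : ℝ → ℝ} (hα : Irrational α)
    (hφ : Continuous φ) (hp : Periodic φ 1) :
    TendstoUniformly (birkhoffAverage ℝ (· + α) φ) (fun _ => ∫ x in (0 : ℝ)..1, φ x) atTop := by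
  set D := ∫ x in (0 : ℝ)..1, φ x
  rw [Metric.tendstoUniformly_iff]
  intro ε hε
  obtain ⟨M, hM⟩ := isBounded_iff_forall_norm_le.1 (hp.isBounded_of_continuous one_ne_zero hφ)
  have hφM : ∀ x, |φ x| ≤ M := fun x => hM _ (mem_range_self x)
  obtain ⟨r, hr, hφr⟩ := Metric.uniformContinuous_iff.1
    (hp.uniformContinuous_of_continuous one_pos hφ) (ε / 3) (by positivity)
  obtain ⟨K, hK⟩ := hα.exists_forall_abs_sub_int_mul_add_int_lt hr
  filter_upwards [eventually_gt_atTop 0,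
    (tendsto_const_div_atTop_nhds_zero_nat (K * (2 * M))).eventually
      (gt_mem_nhds (by positivity : (0 : ℝ) < ε / 3))] with N hN hNK x
  set S := birkhoffSum (· + α) φ N
  have hstep : ∀ y, |S (y + α) - S y| ≤ 2 * M := fun y => by
    rw [birkhoffSum_apply_sub_birkhoffSum]
    linarith [abs_sub (φ ((· + α)^[N] y)) (φ y), hφM ((· + α)^[N] y), hφM y]
  have hclose : ∀ y z, |y - z| < r → |S y - S z| ≤ N * (ε / 3) := fun y z hyz => by
    simp only [S, birkhoffSum, add_right_iterate_apply, ← Finset.sum_sub_distrib]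
    refine (Finset.abs_sum_le_sum_abs _ _).trans ?_
    refine (Finset.sum_le_sum fun j _ => (hφr ?_).le).trans (by simp)
    simpa [Real.dist_eq] using hyz
  -- Any `y` lies within `r` of `x + m α` modulo `1` with `|m| ≤ K`, so `S` oscillates by at
  -- most `N ε / 3 + 2 M K`, and so `S x` is that close to its mean `N D`.
  have hosc : |S x - N * D| ≤ N * (ε / 3) + K * (2 * M) := by
    rw [← hp.intervalIntegral_birkhoffSum_add_right hφ α N]
    refine abs_sub_intervalIntegral_le ?_ fun y => ?_
    · exact (continuous_finsetSum _ fun j _ =>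
        hφ.comp ((continuous_add_const α).iterate j)).intervalIntegrable _ _
    · rw [abs_sub_comm]
      exact (hp.birkhoffSum_add_right α N).abs_sub_le_of_abs_add_sub_le hstep hclose hK x y
  have hN' : (0 : ℝ) < N := by exact_mod_cast hN
  have hdiv : (N : ℝ)⁻¹ * S x - D = (S x - N * D) / N := by field_simp
  rw [div_lt_iff₀ hN'] at hNK
  rw [Real.dist_eq, birkhoffAverage, smul_eq_mul, abs_sub_comm, hdiv, abs_div, abs_of_pos hN',
    div_lt_iff₀ hN']
  linarith [mul_pos hε hN']

theorem UniformContinuous.tendsto_sub_nhds_zero {X : Type*} {φ : ℝ → ℝ} {l : Filter X}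
    {a b : X → ℝ} (hφ : UniformContinuous φ) (h : Tendsto (fun p => a p - b p) l (𝓝 0)) :
    Tendsto (fun p => φ (a p) - φ (b p)) l (𝓝 0) := by
  have hab : Tendsto (fun p => (b p, a p)) l (𝓤 ℝ) := by
    rwa [uniformity_eq_comap_nhds_zero ℝ, tendsto_comap_iff]
  have hφab := Tendsto.comp hφ hab
  rwa [uniformity_eq_comap_nhds_zero ℝ, tendsto_comap_iff] at hφab

theorem isLittleO_iterate_sub_birkhoffSum {f : ℝ → ℝ → ℝ} {α : ℝ} {φ : ℝ → ℝ}
    (hφ : UniformContinuous φ) (hφb : Bornology.IsBounded (range φ))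
    (hf : (fun p : ℝ × ℝ => f p.1 p.2 - (p.2 + α + p.1 * φ p.2)) =o[𝓝 0 ×ˢ ⊤] Prod.fst)
    (N : ℕ) :
    (fun p : ℝ × ℝ => (f p.1)^[N] p.2 - (p.2 + N * α + p.1 * birkhoffSum (· + α) φ N p.2))
      =o[𝓝 0 ×ˢ ⊤] Prod.fst := by
  induction N with
  | zero => simp
  | succ N ih =>
    set y : ℝ × ℝ → ℝ := fun p => (f p.1)^[N] p.2
    have hmap : Tendsto (fun p : ℝ × ℝ => (p.1, y p)) (𝓝 0 ×ˢ ⊤) (𝓝 0 ×ˢ ⊤) :=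
      tendsto_fst.prodMk tendsto_top
    have hstep := hf.comp_tendsto hmap
    obtain ⟨M, hM⟩ := isBounded_iff_forall_norm_le.1 hφb
    have hS : IsBoundedUnder (· ≤ ·) (𝓝 0 ×ˢ ⊤)
        ((‖·‖) ∘ fun p : ℝ × ℝ => birkhoffSum (· + α) φ N p.2) := by
      refine isBoundedUnder_of ⟨N * M, fun p => ?_⟩
      refine (norm_sum_le _ _).trans ?_
      simpa using Finset.sum_le_card_nsmul (Finset.range N) (fun j => ‖φ ((· + α)^[j] p.2)‖) M
        fun j _ => hM _ (mem_range_self _)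
    have hdrift : Tendsto (fun p : ℝ × ℝ => y p - (p.2 + N * α)) (𝓝 0 ×ˢ ⊤) (𝓝 0) := by
      have := (ih.trans_tendsto tendsto_fst).add (tendsto_fst.zero_mul_isBoundedUnder_le hS)
      rw [add_zero] at this
      exact this.congr fun p => by simp only [y]; ring
    have hφdrift := (isLittleO_one_iff ℝ).2 (hφ.tendsto_sub_nhds_zero hdrift)
    have hlast := (isBigO_refl (Prod.fst : ℝ × ℝ → ℝ) (𝓝 0 ×ˢ ⊤)).mul_isLittleO hφdrift
    simp only [mul_one] at hlast
    refine ((hstep.add ih).add hlast).congr_left fun p => ?_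
    simp only [comp_apply, iterate_succ_apply', birkhoffSum_succ, add_right_iterate_apply,
      nsmul_eq_mul, y]
    push_cast
    ring

theorem hasDerivAt_of_forall_eventually_abs_sub_le {ρ : ℝ → ℝ} {a D : ℝ}
    (h : ∀ δ > 0, ∀ᶠ t in 𝓝 0, |ρ t - (a + t * D)| ≤ δ * |t|) : HasDerivAt ρ D 0 := by
  have hρ0 : ρ 0 = a := by simpa [sub_eq_zero] using (h 1 one_pos).self_of_nhds
  rw [hasDerivAt_iff_isLittleO]
  refine IsLittleO.of_bound fun δ hδ => ?_
  filter_upwards [h δ hδ] with t ht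
  simpa [hρ0, sub_sub] using ht

theorem hasDerivAt_of_isLittleO_sub_add_rotation {f : ℝ → ℝ → ℝ} {ρ : ℝ → ℝ} {α : ℝ}
    {φ : ℝ → ℝ} (hα : Irrational α) (hφ : Continuous φ) (hp : Periodic φ 1)
    (hf : (fun p : ℝ × ℝ => f p.1 p.2 - (p.2 + α + p.1 * φ p.2)) =o[𝓝 0 ×ˢ ⊤] Prod.fst)
    (hρ : ∀ᶠ t in 𝓝 0, HasTransNum (f t) (ρ t)) :
    HasDerivAt ρ (∫ x in (0 : ℝ)..1, φ x) 0 := by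
  set D := ∫ x in (0 : ℝ)..1, φ x
  refine hasDerivAt_of_forall_eventually_abs_sub_le (a := α) fun δ hδ => ?_
  obtain ⟨N, hBN, hN⟩ := ((Metric.tendstoUniformly_iff.1
    (hα.tendstoUniformly_birkhoffAverage_add hφ hp) (δ / 2) (by positivity)).and
    (eventually_gt_atTop 0)).exists
  have hN' : (0 : ℝ) < N := by exact_mod_cast hN
  have hiter := (isLittleO_iterate_sub_birkhoffSum (hp.uniformContinuous_of_continuous one_pos hφ)
    (hp.isBounded_of_continuous one_ne_zero hφ) hf N).bound (by positivity : 0 < N * (δ / 2))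
  rw [← principal_univ, eventually_prod_principal_iff] at hiter
  filter_upwards [hρ, hiter] with t hρt ht
  have hbound : ∀ x, |(f t)^[N] x - x - N * (α + t * D)| ≤ N * δ * |t| := fun x => by
    set S := birkhoffSum (· + α) φ N x
    have hS : |S - N * D| ≤ N * (δ / 2) := by
      have hSD : S - N * D = N * (birkhoffAverage ℝ (· + α) φ N x - D) := by
        rw [birkhoffAverage, smul_eq_mul, mul_sub, mul_inv_cancel_left₀ hN'.ne']
      rw [hSD, abs_mul, abs_of_pos hN', ← Real.dist_eq, dist_comm]
      exact mul_le_mul_of_nonneg_left (hBN x).le hN'.le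
    calc |(f t)^[N] x - x - N * (α + t * D)|
        = |((f t)^[N] x - (x + N * α + t * S)) + t * (S - N * D)| := by ring_nf
      _ ≤ N * (δ / 2) * |t| + |t| * (N * (δ / 2)) := by
        refine (abs_add_le _ _).trans (add_le_add (by simpa using ht x trivial) ?_)
        rw [abs_mul]
        exact mul_le_mul_of_nonneg_left hS (abs_nonneg t)
      _ = N * δ * |t| := by ring
  have hρN := (hρt.iterate N).abs_sub_le hbound
  rw [← mul_sub, abs_mul, abs_of_pos hN', mul_assoc] at hρN
  exact le_of_mul_le_mul_left hρN hN'

theorem isLittleO_sub_sub_mul_of_tendstoUniformly {f Φ : ℝ → ℝ → ℝ}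
    (hd : ∀ᶠ t in 𝓝 0, ∀ x, HasDerivAt (fun s => f s x) (Φ t x) t)
    (hΦ : TendstoUniformly Φ (Φ 0) (𝓝 0)) :
    (fun p : ℝ × ℝ => f p.1 p.2 - f 0 p.2 - p.1 * Φ 0 p.2) =o[𝓝 0 ×ˢ ⊤] Prod.fst := by
  refine IsLittleO.of_bound fun c hc => ?_
  obtain ⟨r, hr, hball⟩ :=
    Metric.eventually_nhds_iff_ball.1 (hd.and (Metric.tendstoUniformly_iff.1 hΦ c hc))
  filter_upwards [tendsto_fst.eventually (Metric.ball_mem_nhds (0 : ℝ) hr)] with ⟨t, x⟩ ht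
  have hmvt := (convex_ball (0 : ℝ) r).norm_image_sub_le_of_norm_hasDerivWithin_le
    (f := fun s => f s x - s * Φ 0 x) (f' := fun s => Φ s x - Φ 0 x)
    (fun s hs => (((hball s hs).1 x).sub (hasDerivAt_mul_const _)).hasDerivWithinAt)
    (fun s hs => by rw [← dist_eq_norm, dist_comm]; exact ((hball s hs).2 x).le)
    (Metric.mem_ball_self hr) ht
  simpa [sub_sub, add_comm] using hmvt

section PartialDerivative

variable {F : ℝ → ℝ → ℝ} {U : Set ℝ}

theorem hasDerivAt_snd_of_contDiffOn (hU : IsOpen U)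
    (hF : ContDiffOn ℝ 1 (fun p : ℝ × ℝ => F p.1 p.2) (univ ×ˢ U)) {x t : ℝ} (ht : t ∈ U) :
    HasDerivAt (fun s => F x s) (fderiv ℝ (fun p : ℝ × ℝ => F p.1 p.2) (x, t) (0, 1)) t :=
  ((hF.differentiableOn one_ne_zero).differentiableAt
    ((isOpen_univ.prod hU).mem_nhds ⟨mem_univ x, ht⟩)).hasFDerivAt.comp_hasDerivAt t
    ((hasDerivAt_const t x).prodMk (hasDerivAt_id t))

theorem continuousOn_deriv_snd_of_contDiffOn (hU : IsOpen U)
    (hF : ContDiffOn ℝ 1 (fun p : ℝ × ℝ => F p.1 p.2) (univ ×ˢ U)) :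
    ContinuousOn (fun p : ℝ × ℝ => deriv (fun s => F p.2 s) p.1) (U ×ˢ univ) := by
  have hfd := (hF.continuousOn_fderiv_of_isOpen (isOpen_univ.prod hU) le_rfl).clm_apply
    (continuousOn_const (c := ((0 : ℝ), (1 : ℝ))))
  refine (hfd.comp continuous_swap.continuousOn fun p hp => ⟨mem_univ _, hp.1⟩).congr
    fun p hp => (hasDerivAt_snd_of_contDiffOn hU hF hp.1).deriv

theorem periodic_deriv_snd (hU : IsOpen U) (hper : ∀ x, ∀ t ∈ U, F (x + 1) t = F x t + 1)
    {t : ℝ} (ht : t ∈ U) : Periodic (fun x => deriv (fun s => F x s) t) 1 := fun x => by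
  have heq : (fun s => F (x + 1) s) =ᶠ[𝓝 t] fun s => F x s + 1 :=
    eventually_of_mem (hU.mem_nhds ht) (hper x)
  simp only [heq.deriv_eq, deriv_add_const]

end PartialDerivative

theorem rotNum_deriv_at_irrational_rotation_general (ε : ℝ) (hε : 0 < ε) (F : ℝ → ℝ → ℝ)
    (hC1 : ContDiffOn ℝ 1 (fun p : ℝ × ℝ => F p.1 p.2) (univ ×ˢ Ioo (-ε) ε))
    (hper : ∀ x : ℝ, ∀ t ∈ Ioo (-ε) ε, F (x + 1) t = F x t + 1)
    (α : ℝ) (hα : Irrational α) (h0 : ∀ x : ℝ, F x 0 = x + α)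
    (ρ : ℝ → ℝ) (hρ : ∀ t ∈ Ioo (-ε) ε, HasTransNum (fun x => F x t) (ρ t)) :
    HasDerivWithinAt ρ (∫ x in (0:ℝ)..1, deriv (fun t => F x t) 0) (Ioo (-ε) ε) 0 := by
  have hU : Ioo (-ε) ε ∈ 𝓝 0 := Ioo_mem_nhds (neg_neg_of_pos hε) hε
  have h0U : (0 : ℝ) ∈ Ioo (-ε) ε := mem_of_mem_nhds hU
  set Φ : ℝ → ℝ → ℝ := fun t x => deriv (fun s => F x s) t
  have hΦc : ContinuousOn (uncurry Φ) (Ioo (-ε) ε ×ˢ univ) :=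
    continuousOn_deriv_snd_of_contDiffOn isOpen_Ioo hC1
  have hΦp : ∀ t ∈ Ioo (-ε) ε, Periodic (Φ t) 1 := fun t => periodic_deriv_snd isOpen_Ioo hper
  have hφc : Continuous (Φ 0) :=
    hΦc.comp_continuous (continuous_const.prodMk continuous_id) fun _ => ⟨h0U, trivial⟩
  have hd : ∀ᶠ t in 𝓝 0, ∀ x, HasDerivAt (fun s => F x s) (Φ t x) t := by
    filter_upwards [hU] with t ht x
    exact (hasDerivAt_snd_of_contDiffOn isOpen_Ioo hC1 ht).differentiableAt.hasDerivAt
  have hlin := isLittleO_sub_sub_mul_of_tendstoUniformly hd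
    (hΦc.tendstoUniformly_of_periodic hU one_pos hΦp)
  simp only [h0, sub_sub] at hlin
  exact (hasDerivAt_of_isLittleO_sub_add_rotation (f := fun t x => F x t) hα hφc
    (hΦp 0 h0U) hlin (eventually_of_mem hU hρ)).hasDerivWithinAt

/-- Brunovský–Herman: for a C¹ family of circle diffeomorphisms with `f_0` an
irrational rotation `R_α`, the (lifted) rotation number is differentiable at
`t = 0` with derivative `∫_{S¹} ∂f/∂t(x, 0) dx`. -/
theorem rotNum_deriv_at_irrational_rotation (ε : ℝ) (hε : 0 < ε) (F : ℝ → ℝ → ℝ)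
    (hC1 : ContDiffOn ℝ 1 (fun p : ℝ × ℝ => F p.1 p.2) (univ ×ˢ Ioo (-ε) ε))
    (hper : ∀ x : ℝ, ∀ t ∈ Ioo (-ε) ε, F (x + 1) t = F x t + 1)
    (hmono : ∀ t ∈ Ioo (-ε) ε, StrictMono fun x => F x t)
    (α : ℝ) (hα : Irrational α) (h0 : ∀ x : ℝ, F x 0 = x + α)
    (ρ : ℝ → ℝ) (hρ : ∀ t ∈ Ioo (-ε) ε, HasTransNum (fun x => F x t) (ρ t)) :
    HasDerivWithinAt ρ (∫ x in (0:ℝ)..1, deriv (fun t => F x t) 0) (Ioo (-ε) ε) 0 :=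
  rotNum_deriv_at_irrational_rotation_general ε hε F hC1 hper α hα h0 ρ hρ
end
end
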